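/- arXiv:2012.14659 — 10 statements merged into one kernel-verified Lean document; each statement's English description precedes it below -/
import Mathlib

section
/- Let p ≥ 2 be an integer and let A be an n×n matrix whose entries are formal power series in ℂ[[z]] and whose constant-term matrix A(0) is invertible. Then there exists a unique n×n matrix F with entries in ℂ[[z]] such that F(0) = Iₙ (the constant-term matrix of F is the identity) and A(z)·F(z) = F(z^p)·A(0), where F(z^p) denotes the matrix obtained by substituting z^p for z in every entry of F. Moreover F is invertible over ℂ[[z]]. -/
/-- The Mahler substitution `f(z) ↦ f(z^p)` on formal power series, defined via
coefficients: the coefficient of `z^k` in `f(z^p)` is the coefficient of `z^(k/p)`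
in `f` when `p ∣ k`, and `0` otherwise. -/
noncomputable def mahlerSubst (p : ℕ) (f : PowerSeries ℂ) : PowerSeries ℂ :=
  PowerSeries.mk fun k => if p ∣ k then PowerSeries.coeff (R := ℂ) (k / p) f else 0

/-!
Write `A = ∑ Aₘ zᵐ` and `F = ∑ Fₘ zᵐ`. Comparing coefficients of `zᵐ` in `A F = F(zᵖ) A₀` gives
`A₀ Fₘ + ∑_{j<m} A_{m-j} Fⱼ = [p ∣ m] F_{m/p} A₀`. As `p ≥ 2`, `m / p < m` for `m ≥ 1`, so for
invertible `A₀` this determines `Fₘ` from earlier coefficients: the solution with `F₀ = 1` exists and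
is unique. Any such `F` is invertible because `det F` has constant term `det F(0) = 1`.
-/

open PowerSeries Finset

section CoeffMatrix

variable {ι R : Type*} [CommSemiring R]

noncomputable def coeffMatrix (m : ℕ) (M : Matrix ι ι R⟦X⟧) : Matrix ι ι R :=
  M.map (coeff m)

noncomputable def ofCoeffMatrices (G : ℕ → Matrix ι ι R) : Matrix ι ι R⟦X⟧ :=
  Matrix.of fun i j => mk fun m => G m i j

@[simp]
lemma coeffMatrix_ofCoeffMatrices (G : ℕ → Matrix ι ι R) (m : ℕ) :
    coeffMatrix m (ofCoeffMatrices G) = G m := by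
  ext i j
  simp [coeffMatrix, ofCoeffMatrices]

lemma coeffMatrix_zero (M : Matrix ι ι R⟦X⟧) : coeffMatrix 0 M = M.map constantCoeff := by
  ext i j
  simp [coeffMatrix]

lemma coeffMatrix_ext {M N : Matrix ι ι R⟦X⟧} (h : ∀ m, coeffMatrix m M = coeffMatrix m N) :
    M = N :=
  Matrix.ext fun i j => PowerSeries.ext fun m => congrFun (congrFun (h m) i) j

lemma coeffMatrix_mul [Fintype ι] (m : ℕ) (M N : Matrix ι ι R⟦X⟧) :
    coeffMatrix m (M * N) = ∑ ij ∈ antidiagonal m, coeffMatrix ij.1 M * coeffMatrix ij.2 N := by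
  ext i j
  simp only [coeffMatrix, Matrix.map_apply, Matrix.mul_apply, Matrix.sum_apply, map_sum,
    coeff_mul]
  exact Finset.sum_comm

lemma coeffMatrix_map_C (m : ℕ) (B : Matrix ι ι R) :
    coeffMatrix m (B.map C) = if m = 0 then B else 0 := by
  ext i j
  split_ifs <;> simp [coeffMatrix, coeff_C, *]

lemma coeffMatrix_mul_map_C [Fintype ι] (m : ℕ) (M : Matrix ι ι R⟦X⟧) (B : Matrix ι ι R) :
    coeffMatrix m (M * B.map C) = coeffMatrix m M * B := by
  rw [coeffMatrix_mul, Finset.Nat.sum_antidiagonal_eq_sum_range_succ_mk, sum_range_succ,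
    Finset.sum_eq_zero fun k hk => ?_]
  · simp [coeffMatrix_map_C]
  · rw [coeffMatrix_map_C, if_neg (by simp at hk; omega), mul_zero]

end CoeffMatrix

lemma coeffMatrix_map_mahlerSubst {ι : Type*} (p m : ℕ) (M : Matrix ι ι ℂ⟦X⟧) :
    coeffMatrix m (M.map (mahlerSubst p)) = if p ∣ m then coeffMatrix (m / p) M else 0 := by
  ext i j
  split_ifs <;> simp [coeffMatrix, mahlerSubst, *]

lemma isUnit_det_of_map_constantCoeff_eq_one {ι R : Type*} [Fintype ι] [DecidableEq ι]
    [CommRing R] {M : Matrix ι ι R⟦X⟧} (hM : M.map constantCoeff = 1) : IsUnit M.det := by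
  rw [isUnit_iff_constantCoeff, RingHom.map_det, RingHom.mapMatrix_apply, hM, Matrix.det_one]
  exact isUnit_one

section Recurrence

variable {S : Type*} [Ring S]

lemma sum_antidiagonal_mul_eq_mul_add_sum_fin (a G : ℕ → S) (m : ℕ) :
    ∑ ij ∈ antidiagonal m, a ij.1 * G ij.2 = a 0 * G m + ∑ j : Fin m, a (m - j) * G j := by
  rw [← Finset.Nat.sum_antidiagonal_swap, Finset.Nat.sum_antidiagonal_eq_sum_range_succ_mk,
    sum_range_succ, Fin.sum_univ_eq_sum_range (fun j => a (m - j) * G j), add_comm]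
  simp

def IsMahlerCoeffSeq (p : ℕ) (a G : ℕ → S) : Prop :=
  G 0 = 1 ∧ ∀ m, ∑ ij ∈ antidiagonal m, a ij.1 * G ij.2 = (if p ∣ m then G (m / p) else 0) * a 0

noncomputable def mahlerCoeffSeq (p : ℕ) (hp : 1 < p) (a : ℕ → S) : ℕ → S
  | 0 => 1
  | m + 1 => Ring.inverse (a 0) *
      ((if p ∣ m + 1 then mahlerCoeffSeq p hp a ((m + 1) / p) else 0) * a 0 -
        ∑ j : Fin (m + 1), a (m + 1 - j) * mahlerCoeffSeq p hp a j)
termination_by m => m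
decreasing_by
  · exact Nat.div_lt_self m.succ_pos hp
  · exact j.isLt

lemma isMahlerCoeffSeq_iff {p : ℕ} {a G : ℕ → S} (ha : IsUnit (a 0)) :
    IsMahlerCoeffSeq p a G ↔ G 0 = 1 ∧ ∀ m, G (m + 1) = Ring.inverse (a 0) *
      ((if p ∣ m + 1 then G ((m + 1) / p) else 0) * a 0 -
        ∑ j : Fin (m + 1), a (m + 1 - j) * G j) := by
  obtain ⟨u, hu⟩ := ha
  simp only [IsMahlerCoeffSeq, ← hu, Ring.inverse_unit, Units.eq_inv_mul_iff_mul_eq,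
    eq_sub_iff_add_eq, sum_antidiagonal_mul_eq_mul_add_sum_fin]
  refine and_congr_right fun hG0 => ⟨fun h m => h (m + 1), fun h m => ?_⟩
  cases m with
  | zero => simp [hG0]
  | succ m => exact h m

lemma isMahlerCoeffSeq_mahlerCoeffSeq {p : ℕ} (hp : 1 < p) {a : ℕ → S} (ha : IsUnit (a 0)) :
    IsMahlerCoeffSeq p a (mahlerCoeffSeq p hp a) := by
  rw [isMahlerCoeffSeq_iff ha]
  exact ⟨by rw [mahlerCoeffSeq], fun m => by rw [mahlerCoeffSeq]⟩

lemma IsMahlerCoeffSeq.unique {p : ℕ} (hp : 1 < p) {a G H : ℕ → S} (ha : IsUnit (a 0))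
    (hG : IsMahlerCoeffSeq p a G) (hH : IsMahlerCoeffSeq p a H) : G = H := by
  rw [isMahlerCoeffSeq_iff ha] at hG hH
  funext m
  induction m using Nat.strong_induction_on with
  | _ m ih =>
    cases m with
    | zero => rw [hG.1, hH.1]
    | succ m =>
      rw [hG.2, hH.2, ih _ (Nat.div_lt_self m.succ_pos hp)]
      simp only [fun j : Fin (m + 1) => ih j j.isLt]

end Recurrence

lemma mahlerEquation_iff_isMahlerCoeffSeq {ι : Type*} [Fintype ι] [DecidableEq ι] (p : ℕ)
    (A F : Matrix ι ι ℂ⟦X⟧) :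
    (F.map constantCoeff = 1 ∧ A * F = F.map (mahlerSubst p) * (A.map constantCoeff).map C) ↔
      IsMahlerCoeffSeq p (coeffMatrix · A) (coeffMatrix · F) := by
  rw [IsMahlerCoeffSeq, ← coeffMatrix_zero, ← coeffMatrix_zero]
  refine and_congr_right fun _ => ⟨fun h m => ?_, fun h => coeffMatrix_ext fun m => ?_⟩
  · rw [← coeffMatrix_mul, h, coeffMatrix_mul_map_C, coeffMatrix_map_mahlerSubst]
  · rw [coeffMatrix_mul, h, coeffMatrix_mul_map_C, coeffMatrix_map_mahlerSubst]

/-- Let `p ≥ 2` and let `A` be an `n×n` matrix over `ℂ[[z]]` with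
`A(0)` invertible. Then there is a unique matrix `F` over `ℂ[[z]]` with `F(0) = 1`
and `A(z)·F(z) = F(z^p)·A(0)`; moreover any such `F` is invertible over `ℂ[[z]]`. -/
theorem mahler_formal_fundamental_solution_at_zero
    (p n : ℕ) (hp : 2 ≤ p)
    (A : Matrix (Fin n) (Fin n) (PowerSeries ℂ))
    (hA0 : IsUnit ((A.map (PowerSeries.constantCoeff (R := ℂ))).det)) :
    (∃! F : Matrix (Fin n) (Fin n) (PowerSeries ℂ),
        F.map (PowerSeries.constantCoeff (R := ℂ)) = 1 ∧
        A * F = (F.map (mahlerSubst p)) *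
          ((A.map (PowerSeries.constantCoeff (R := ℂ))).map (PowerSeries.C (R := ℂ)))) ∧
    (∀ F : Matrix (Fin n) (Fin n) (PowerSeries ℂ),
        F.map (PowerSeries.constantCoeff (R := ℂ)) = 1 →
        A * F = (F.map (mahlerSubst p)) *
          ((A.map (PowerSeries.constantCoeff (R := ℂ))).map (PowerSeries.C (R := ℂ))) →
        IsUnit F.det) := by
  have hA : IsUnit (coeffMatrix 0 A) := by
    rwa [Matrix.isUnit_iff_isUnit_det, coeffMatrix_zero]
  set F₀ := ofCoeffMatrices (mahlerCoeffSeq p hp (coeffMatrix · A))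
  have hF₀ : IsMahlerCoeffSeq p (coeffMatrix · A) (coeffMatrix · F₀) := by
    simpa only [F₀, coeffMatrix_ofCoeffMatrices] using isMahlerCoeffSeq_mahlerCoeffSeq hp hA
  refine ⟨⟨F₀, (mahlerEquation_iff_isMahlerCoeffSeq p A F₀).mpr hF₀, fun F hF => ?_⟩,
    fun F hF0 _ => isUnit_det_of_map_constantCoeff_eq_one hF0⟩
  have hF := (mahlerEquation_iff_isMahlerCoeffSeq p A F).mp hF
  exact coeffMatrix_ext (congrFun (hF.unique hp hA hF₀))
end

section
/- Let p ≥ 2 be an integer and let A be an n×n matrix whose entries are convergent power series (elements of ℂ{z}, i.e. power series with positive radius of convergence) such that A(0) is invertible. Then the unique matrix F with entries in ℂ[[z]], F(0) = Iₙ and A(z)·F(z) = F(z^p)·A(0) has all its entries of positive radius of convergence, i.e. F has entries in ℂ{z}. -/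
/-- A formal power series over `ℂ` has positive radius of convergence, i.e. it is an
element of `ℂ{z}`. -/
def HasPosRadius (f : PowerSeries ℂ) : Prop :=
  ∃ r : ℝ, 0 < r ∧ Summable fun k : ℕ => ‖PowerSeries.coeff (R := ℂ) k f‖ * r ^ k

open Finset PowerSeries

lemma HasPosRadius.exists_norm_coeff_le {f : PowerSeries ℂ} (hf : HasPosRadius f) :
    ∃ B C : ℝ, 0 ≤ B ∧ 0 ≤ C ∧ ∀ k, ‖coeff k f‖ ≤ B * C ^ k := by
  obtain ⟨r, hr, hsum⟩ := hf
  refine ⟨∑' k, ‖coeff k f‖ * r ^ k, r⁻¹, tsum_nonneg fun k => by positivity, by positivity,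
    fun k => ?_⟩
  rw [inv_pow, ← div_eq_mul_inv, le_div_iff₀ (by positivity)]
  exact hsum.le_tsum k fun m _ => by positivity

lemma hasPosRadius_of_norm_coeff_le {f : PowerSeries ℂ} {E D : ℝ} (hD : 0 < D)
    (h : ∀ k, ‖coeff k f‖ ≤ E * D ^ k) : HasPosRadius f := by
  refine ⟨(2 * D)⁻¹, by positivity, .of_nonneg_of_le (fun k => by positivity) (fun k => ?_)
    (summable_geometric_two.mul_left E)⟩
  calc ‖coeff k f‖ * (2 * D)⁻¹ ^ k ≤ E * D ^ k * (2 * D)⁻¹ ^ k := by gcongr; exact h k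
    _ = E * (1 / 2) ^ k := by rw [mul_assoc, ← mul_pow]; field_simp

lemma exists_sum_le_mul_pow {ι : Type*} [Fintype ι] {u : ι → ℕ → ℝ}
    (h : ∀ i, ∃ B C : ℝ, 0 ≤ B ∧ 0 ≤ C ∧ ∀ k, u i k ≤ B * C ^ k) :
    ∃ B C : ℝ, 0 ≤ B ∧ 0 ≤ C ∧ ∀ k, ∑ i, u i k ≤ B * C ^ k := by
  choose B C hB hC hu using h
  refine ⟨∑ i, B i, ∑ i, C i, sum_nonneg fun i _ => hB i, sum_nonneg fun i _ => hC i,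
    fun k => ?_⟩
  calc ∑ i, u i k ≤ ∑ i, B i * (∑ j, C j) ^ k := by
        gcongr with i
        exact (hu i k).trans <| by
          gcongr; exacts [hB i, hC i, single_le_sum (fun j _ => hC j) (mem_univ i)]
    _ = (∑ i, B i) * (∑ i, C i) ^ k := by rw [sum_mul]

lemma pow_mul_pow_le_of_two_mul_le {C D : ℝ} (hC : 0 ≤ C) (hCD : 2 * C ≤ D) (i j : ℕ) :
    C ^ i * D ^ j ≤ D ^ (i + j) * (1 / 2) ^ i := by
  have hD : 0 ≤ D := by linarith
  calc C ^ i * D ^ j ≤ (D * (1 / 2)) ^ i * D ^ j := by gcongr; linarith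
    _ = D ^ (i + j) * (1 / 2) ^ i := by rw [mul_pow, pow_add]; ring

lemma exists_le_mul_pow_of_le_recursion {u : ℕ → ℝ} {σ : ℕ → ℕ} {K L C : ℝ}
    (hσ : ∀ k, σ (k + 1) ≤ k) (hu : ∀ k, 0 ≤ u k) (hK : 0 ≤ K) (hL : 0 ≤ L) (hC : 0 ≤ C)
    (hrec : ∀ k, u (k + 1) ≤
      K * u (σ (k + 1)) + L * ∑ x ∈ antidiagonal k, C ^ (x.1 + 1) * u x.2) :
    ∃ D, 0 < D ∧ ∀ k, u k ≤ u 0 * D ^ k := by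
  set D := max (2 * C) (max 1 (K + 2 * L * C))
  have hD1 : 1 ≤ D := le_max_of_le_right (le_max_left _ _)
  have h2C : 2 * C ≤ D := le_max_left _ _
  have hKLC : K + 2 * L * C ≤ D := le_max_of_le_right (le_max_right _ _)
  refine ⟨D, by linarith, fun k => ?_⟩
  induction k using Nat.strong_induction_on with
  | _ k ih =>
  cases k with
  | zero => simp
  | succ k =>
    have hu0 : 0 ≤ u 0 * D ^ k := mul_nonneg (hu 0) (by positivity)
    have hmahler : u (σ (k + 1)) ≤ u 0 * D ^ k :=
      (ih _ (Nat.lt_succ_of_le (hσ k))).trans (by gcongr; exacts [hu 0, hσ k])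
    have hconv : ∑ x ∈ antidiagonal k, C ^ (x.1 + 1) * u x.2 ≤ 2 * C * (u 0 * D ^ k) := by
      calc ∑ x ∈ antidiagonal k, C ^ (x.1 + 1) * u x.2
          ≤ ∑ x ∈ antidiagonal k, C * (u 0 * D ^ k) * (1 / 2) ^ x.1 := by
            refine sum_le_sum fun x hx => ?_
            rw [HasAntidiagonal.mem_antidiagonal] at hx
            calc C ^ (x.1 + 1) * u x.2 ≤ C ^ (x.1 + 1) * (u 0 * D ^ x.2) := by
                  gcongr; exact ih _ (by omega)
              _ = C * u 0 * (C ^ x.1 * D ^ x.2) := by ring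
              _ ≤ C * u 0 * (D ^ k * (1 / 2) ^ x.1) := by
                  rw [← hx]
                  exact mul_le_mul_of_nonneg_left (pow_mul_pow_le_of_two_mul_le hC h2C _ _)
                    (mul_nonneg hC (hu 0))
              _ = C * (u 0 * D ^ k) * (1 / 2) ^ x.1 := by ring
        _ = C * (u 0 * D ^ k) * ∑ i ∈ range (k + 1), (1 / 2 : ℝ) ^ i := by
            rw [← mul_sum, Nat.sum_antidiagonal_eq_sum_range_succ_mk]
        _ ≤ C * (u 0 * D ^ k) * 2 := by gcongr; exact sum_geometric_two_le _
        _ = 2 * C * (u 0 * D ^ k) := by ring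
    calc u (k + 1) ≤ K * u (σ (k + 1)) + L * ∑ x ∈ antidiagonal k, C ^ (x.1 + 1) * u x.2 :=
          hrec k
      _ ≤ K * (u 0 * D ^ k) + L * (2 * C * (u 0 * D ^ k)) := by gcongr
      _ = (K + 2 * L * C) * (u 0 * D ^ k) := by ring
      _ ≤ D * (u 0 * D ^ k) := by gcongr
      _ = u 0 * D ^ (k + 1) := by ring

lemma exists_norm_le_mul_pow_of_mahler_recursion {R : Type*} [NormedRing R] {p : ℕ}
    (hp : p ≠ 1) {a f : ℕ → R} {b : R} (hb : b * a 0 = 1) {B C : ℝ} (hB : 0 ≤ B) (hC : 0 ≤ C)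
    (ha : ∀ k, ‖a k‖ ≤ B * C ^ k)
    (hrec : ∀ k, ∑ x ∈ antidiagonal k, a x.1 * f x.2 = (if p ∣ k then f (k / p) else 0) * a 0) :
    ∃ D, 0 < D ∧ ∀ k, ‖f k‖ ≤ ‖f 0‖ * D ^ k := by
  refine exists_le_mul_pow_of_le_recursion (σ := (· / p)) (K := ‖b‖ * ‖a 0‖) (L := ‖b‖ * B)
    (fun k => ?_) (fun _ => norm_nonneg _) (by positivity) (by positivity) hC fun k => ?_
  · rcases Nat.eq_zero_or_pos p with rfl | hp0
    · simp
    · exact Nat.le_of_lt_succ (Nat.div_lt_self k.succ_pos (by omega))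
  set c := if p ∣ k + 1 then f ((k + 1) / p) else 0
  set s := ∑ x ∈ antidiagonal k, a (x.1 + 1) * f x.2
  have hc : ‖c‖ ≤ ‖f ((k + 1) / p)‖ := by
    unfold c; split_ifs <;> simp
  have hsolve : f (k + 1) = b * (c * a 0 - s) := by
    rw [← hrec (k + 1), Nat.sum_antidiagonal_succ, add_sub_cancel_right, ← mul_assoc, hb,
      one_mul]
  have hs : ‖s‖ ≤ B * ∑ x ∈ antidiagonal k, C ^ (x.1 + 1) * ‖f x.2‖ := by
    rw [mul_sum]
    refine (norm_sum_le _ _).trans (sum_le_sum fun x _ => ?_)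
    calc ‖a (x.1 + 1) * f x.2‖ ≤ ‖a (x.1 + 1)‖ * ‖f x.2‖ := norm_mul_le _ _
      _ ≤ B * C ^ (x.1 + 1) * ‖f x.2‖ := by gcongr; exact ha _
      _ = B * (C ^ (x.1 + 1) * ‖f x.2‖) := mul_assoc _ _ _
  calc ‖f (k + 1)‖ ≤ ‖b‖ * ‖c * a 0 - s‖ := hsolve ▸ norm_mul_le _ _
    _ ≤ ‖b‖ * (‖c‖ * ‖a 0‖ + ‖s‖) := by
        gcongr; exact (norm_sub_le _ _).trans (by gcongr; exact norm_mul_le _ _)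
    _ ≤ ‖b‖ * (‖f ((k + 1) / p)‖ * ‖a 0‖ + B * ∑ x ∈ antidiagonal k, C ^ (x.1 + 1) * ‖f x.2‖) := by
        gcongr
    _ = _ := by ring

lemma coeff_mahlerSubst (p k : ℕ) (f : PowerSeries ℂ) :
    coeff k (mahlerSubst p f) = if p ∣ k then coeff (k / p) f else 0 :=
  coeff_mk _ _

namespace Matrix

section LinftyOpNorm

attribute [local instance] Matrix.linftyOpSeminormedAddCommGroup

variable {m n α : Type*} [Fintype m] [Fintype n] [SeminormedAddCommGroup α]

lemma norm_entry_le_linfty_opNorm (M : Matrix m n α) (i : m) (j : n) : ‖M i j‖ ≤ ‖M‖ := by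
  have h : ‖M i j‖₊ ≤ ‖M‖₊ := by
    rw [linfty_opNNNorm_def]
    exact (single_le_sum (fun _ _ => zero_le) (mem_univ j)).trans
      (le_sup (f := fun i => ∑ j, ‖M i j‖₊) (mem_univ i))
  exact_mod_cast h

lemma linfty_opNorm_le_sum_norm_entries (M : Matrix m n α) : ‖M‖ ≤ ∑ i, ∑ j, ‖M i j‖ := by
  have h : ‖M‖₊ ≤ ∑ i, ∑ j, ‖M i j‖₊ := by
    rw [linfty_opNNNorm_def]
    exact Finset.sup_le fun i _ =>
      single_le_sum (f := fun i => ∑ j, ‖M i j‖₊) (fun _ _ => zero_le) (mem_univ i)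
  simpa only [← NNReal.coe_le_coe, NNReal.coe_sum, coe_nnnorm] using h

end LinftyOpNorm

variable {l m n : Type*} [Fintype m]

lemma map_coeff_mul {R : Type*} [Semiring R] (M : Matrix l m R⟦X⟧) (N : Matrix m n R⟦X⟧)
    (k : ℕ) :
    (M * N).map (coeff k) = ∑ x ∈ antidiagonal k, M.map (coeff x.1) * N.map (coeff x.2) := by
  ext i j
  simp only [map_apply, mul_apply, sum_apply, map_sum, coeff_mul]
  exact sum_comm

lemma map_coeff_map_mahlerSubst_mul_map_C (p k : ℕ) (F : Matrix l m ℂ⟦X⟧) (M : Matrix m n ℂ) :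
    (F.map (mahlerSubst p) * M.map C).map (coeff k) =
      (if p ∣ k then F.map (coeff (k / p)) else 0) * M := by
  ext i j
  split_ifs <;> simp [mul_apply, coeff_mul_C, coeff_mahlerSubst, *]

end Matrix

attribute [local instance] Matrix.linftyOpNormedRing

/-- Let `p ≥ 2` and let `A` be an `n×n` matrix of convergent power
series with `A(0)` invertible. Then the unique matrix `F` over `ℂ[[z]]` with
`F(0) = 1` and `A(z)·F(z) = F(z^p)·A(0)` has all its entries convergent. -/
theorem mahler_formal_solution_is_convergent
    (p n : ℕ) (hp : 2 ≤ p)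
    (A : Matrix (Fin n) (Fin n) (PowerSeries ℂ))
    (hAconv : ∀ i j, HasPosRadius (A i j))
    (hA0 : IsUnit ((A.map (PowerSeries.constantCoeff (R := ℂ))).det)) :
    ∀ F : Matrix (Fin n) (Fin n) (PowerSeries ℂ),
      F.map (PowerSeries.constantCoeff (R := ℂ)) = 1 →
      A * F = (F.map (mahlerSubst p)) *
        ((A.map (PowerSeries.constantCoeff (R := ℂ))).map (PowerSeries.C (R := ℂ))) →
      ∀ i j, HasPosRadius (F i j) := by
  intro F _ heq i j
  obtain ⟨B, C, hB, hC, hAsum⟩ := exists_sum_le_mul_pow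
    (u := fun (x : Fin n × Fin n) k => ‖coeff k (A x.1 x.2)‖)
    fun x => (hAconv x.1 x.2).exists_norm_coeff_le
  have hA : ∀ k, ‖A.map (coeff k)‖ ≤ B * C ^ k := fun k =>
    (Matrix.linfty_opNorm_le_sum_norm_entries _).trans
      (by simpa only [Fintype.sum_prod_type, Matrix.map_apply] using hAsum k)
  have hrec : ∀ k, ∑ x ∈ antidiagonal k, A.map (coeff x.1) * F.map (coeff x.2) =
      (if p ∣ k then F.map (coeff (k / p)) else 0) * A.map (coeff 0) := fun k => by
    rw [← Matrix.map_coeff_mul, heq, Matrix.map_coeff_map_mahlerSubst_mul_map_C,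
      coeff_zero_eq_constantCoeff]
  rw [← coeff_zero_eq_constantCoeff] at hA0
  obtain ⟨D, hD, hF⟩ := exists_norm_le_mul_pow_of_mahler_recursion
    (a := fun k => A.map (coeff k)) (f := fun k => F.map (coeff k)) (by omega)
    (Matrix.nonsing_inv_mul _ hA0) hB hC hA hrec
  exact hasPosRadius_of_norm_coeff_le hD fun k =>
    (Matrix.norm_entry_le_linfty_opNorm _ i j).trans (hF k)
end

section
/- Let p ≥ 2 be an integer and let A be an n×n matrix of rational functions over ℂ such that no entry has a pole at 0 and A(0) is invertible (A is regular at 0). Then there exists an n×n matrix F of functions meromorphic on the open unit disk D(0,1), holomorphic at 0 with F(0) = Iₙ, whose determinant is not identically zero, such that A(z)·F(z) = F(z^p)·A(0) as meromorphic matrices on D(0,1). -/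
/-!
With `C z = (A z)⁻¹` and `b = A 0` the equation reads `F z = C z * F (z ^ p) * b`. Its iterates
`G 0 = 1`, `G (m + 1) z = C z * G m (z ^ p) * b` converge uniformly near `0`: since
`C 0 * b = 1`, successive differences shrink geometrically. So the limit `F` is holomorphic near
`0` with `F 0 = 1`, and the equation `F z = C z * F (z ^ p) * b` carries meromorphy from the disc
of radius `ε` to that of radius `ε ^ (1 / p)`, and so on, exhausting the unit disc. Finally
`det A` is not identically zero, so `A z` is invertible off a discrete set; there the equation
rearranges to `A z * F z = F (z ^ p) * A 0`, and continuity extends it to every point where both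
sides are holomorphic.
-/

open Metric

/-- Evaluation of a rational function over `ℂ` at a point of `ℂ`. -/
noncomputable def ratEval (r : RatFunc ℂ) (z : ℂ) : ℂ := r.eval (RingHom.id ℂ) z

open Filter Topology Set

section MahlerIteration

variable {𝔸 : Type*}

/-- `mahlerIter p C b m z = C z * C (z ^ p) * ⋯ * C (z ^ p ^ (m - 1)) * b ^ m`: the `m`-th
approximation of a solution of `F z = C z * F (z ^ p) * b`. -/
def mahlerIter [Monoid 𝔸] (p : ℕ) (C : ℂ → 𝔸) (b : 𝔸) : ℕ → ℂ → 𝔸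
  | 0 => fun _ => 1
  | m + 1 => fun z => C z * mahlerIter p C b m (z ^ p) * b

noncomputable def mahlerLimit [Monoid 𝔸] [TopologicalSpace 𝔸] (p : ℕ) (C : ℂ → 𝔸) (b : 𝔸)
    (z : ℂ) : 𝔸 :=
  limUnder atTop fun m => mahlerIter p C b m z

section Monoid

variable [Monoid 𝔸] {p : ℕ} {C : ℂ → 𝔸} {b : 𝔸}

lemma mahlerIter_apply_zero (hp : p ≠ 0) (hCb : C 0 * b = 1) (m : ℕ) :
    mahlerIter p C b m 0 = 1 := by
  induction m with
  | zero => rfl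
  | succ m ih => simp only [mahlerIter, zero_pow hp, ih, mul_one, hCb]

variable [TopologicalSpace 𝔸]

lemma tendsto_mahlerIter_of_tendsto_pow [ContinuousMul 𝔸] {z : ℂ} {l : 𝔸}
    (h : Tendsto (fun m => mahlerIter p C b m (z ^ p)) atTop (𝓝 l)) :
    Tendsto (fun m => mahlerIter p C b m z) atTop (𝓝 (C z * l * b)) :=
  (tendsto_add_atTop_iff_nat 1).1 ((h.const_mul (C z)).mul_const b)

lemma mahlerLimit_apply_zero [T2Space 𝔸] (hp : p ≠ 0) (hCb : C 0 * b = 1) :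
    mahlerLimit p C b 0 = 1 := by
  simp only [mahlerLimit, mahlerIter_apply_zero hp hCb]
  exact tendsto_const_nhds.limUnder_eq

end Monoid

lemma mapsTo_pow_ball {p : ℕ} (hp : p ≠ 0) {ε : ℝ} (hε : ε ≤ 1) :
    MapsTo (fun z : ℂ => z ^ p) (ball 0 ε) (ball 0 ε) := fun z hz => by
  rw [mem_ball_zero_iff] at hz ⊢
  rw [norm_pow]
  exact (pow_le_of_le_one (norm_nonneg z) (hz.le.trans hε) hp).trans_lt hz

lemma exists_norm_pow_pow_lt {p : ℕ} (hp : 2 ≤ p) {z : ℂ} (hz : ‖z‖ < 1) {ε : ℝ} (hε : 0 < ε) :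
    ∃ k, ‖z ^ p ^ k‖ < ε := by
  obtain ⟨k, hk⟩ := exists_pow_lt_of_lt_one hε hz
  refine ⟨k, ?_⟩
  rw [norm_pow]
  exact (pow_le_pow_of_le_one (norm_nonneg z) hz.le (Nat.lt_pow_self hp).le).trans_lt hk

section Normed

variable [NormedRing 𝔸] {p : ℕ} {C : ℂ → 𝔸} {b : 𝔸}

/-- Each step gains a factor `‖C z‖ * ‖b‖ * ‖z‖ ≤ 1 / 2`, because `‖z ^ p‖ ≤ ‖z‖ ^ 2`. -/
lemma norm_mahlerIter_succ_sub_le (hp : 2 ≤ p) {ε L : ℝ} (hε : ε ≤ 1) (hL : 0 ≤ L)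
    (hC : ∀ z ∈ ball (0 : ℂ) ε, ‖C z‖ * ‖b‖ * ‖z‖ ≤ 1 / 2)
    (hCb : ∀ z ∈ ball (0 : ℂ) ε, ‖C z * b - 1‖ ≤ L * ‖z‖) (m : ℕ) {z : ℂ}
    (hz : z ∈ ball 0 ε) :
    ‖mahlerIter p C b (m + 1) z - mahlerIter p C b m z‖ ≤ L * (1 / 2) ^ m * ‖z‖ := by
  induction m generalizing z with
  | zero => simpa [mahlerIter] using hCb z hz
  | succ m ih =>
    have hz1 : ‖z‖ ≤ 1 := (mem_ball_zero_iff.1 hz).le.trans hε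
    have hzp : ‖z ^ p‖ ≤ ‖z‖ ^ 2 := by
      rw [norm_pow]; exact pow_le_pow_of_le_one (norm_nonneg z) hz1 hp
    have hdiff : mahlerIter p C b (m + 1 + 1) z - mahlerIter p C b (m + 1) z =
        C z * (mahlerIter p C b (m + 1) (z ^ p) - mahlerIter p C b m (z ^ p)) * b := by
      simp only [mahlerIter, mul_sub, sub_mul]
    rw [hdiff]
    calc _ ≤ ‖C z‖ * (L * (1 / 2) ^ m * ‖z ^ p‖) * ‖b‖ := by
          refine norm_mul₃_le.trans ?_
          gcongr
          exact ih (mapsTo_pow_ball (p := p) (by omega) hε hz)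
      _ ≤ ‖C z‖ * (L * (1 / 2) ^ m * ‖z‖ ^ 2) * ‖b‖ := by gcongr
      _ = (‖C z‖ * ‖b‖ * ‖z‖) * (L * (1 / 2) ^ m * ‖z‖) := by ring
      _ ≤ 1 / 2 * (L * (1 / 2) ^ m * ‖z‖) := by gcongr; exact hC z hz
      _ = L * (1 / 2) ^ (m + 1) * ‖z‖ := by ring

lemma tendstoUniformlyOn_mahlerIter [CompleteSpace 𝔸] (hp : 2 ≤ p) {ε L : ℝ} (hε : ε ≤ 1)
    (hL : 0 ≤ L) (hC : ∀ z ∈ ball (0 : ℂ) ε, ‖C z‖ * ‖b‖ * ‖z‖ ≤ 1 / 2)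
    (hCb : ∀ z ∈ ball (0 : ℂ) ε, ‖C z * b - 1‖ ≤ L * ‖z‖) :
    TendstoUniformlyOn (mahlerIter p C b) (mahlerLimit p C b) atTop (ball 0 ε) := by
  set G := mahlerIter p C b
  have hsum : TendstoUniformlyOn (fun N z => ∑ m ∈ Finset.range N, (G (m + 1) z - G m z))
      (fun z => ∑' m, (G (m + 1) z - G m z)) atTop (ball 0 ε) := by
    refine tendstoUniformlyOn_tsum_nat (summable_geometric_two.mul_left L) fun m z hz => ?_
    calc _ ≤ L * (1 / 2) ^ m * ‖z‖ := norm_mahlerIter_succ_sub_le hp hε hL hC hCb m hz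
      _ ≤ L * (1 / 2) ^ m * 1 := by gcongr; exact (mem_ball_zero_iff.1 hz).le.trans hε
      _ = L * (1 / 2) ^ m := mul_one _
  have htel : TendstoUniformlyOn G (fun z => ∑' m, (G (m + 1) z - G m z) + 1) atTop
      (ball 0 ε) := by
    refine (hsum.add ((tendsto_const_nhds (x := (1 : 𝔸))).tendstoUniformlyOn_const _)).congr
      (Eventually.of_forall fun N z _ => ?_)
    simp only [Finset.sum_range_sub (fun m => G m z), Pi.add_apply]
    exact sub_add_cancel _ _
  exact htel.congr_right fun z hz => ((htel.tendsto_at hz).limUnder_eq).symm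

lemma differentiableOn_mahlerIter [NormedAlgebra ℂ 𝔸] (hp : p ≠ 0) {ε : ℝ} (hε : ε ≤ 1)
    (hC : DifferentiableOn ℂ C (ball 0 ε)) (m : ℕ) :
    DifferentiableOn ℂ (mahlerIter p C b m) (ball 0 ε) := by
  induction m with
  | zero => exact differentiableOn_const 1
  | succ m ih =>
    exact (hC.mul (ih.comp (differentiableOn_pow p) (mapsTo_pow_ball hp hε))).mul_const b

variable [NormedAlgebra ℂ 𝔸] [CompleteSpace 𝔸]

theorem exists_ball_differentiableOn_mahlerLimit (hp : 2 ≤ p)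
    (hC : ∀ᶠ z in 𝓝 0, DifferentiableAt ℂ C z) (hCb : C 0 * b = 1) :
    ∃ ε > 0, TendstoUniformlyOn (mahlerIter p C b) (mahlerLimit p C b) atTop (ball 0 ε) ∧
      DifferentiableOn ℂ (mahlerLimit p C b) (ball 0 ε) := by
  obtain ⟨L, hL, hLbound⟩ := (hC.self_of_nhds.mul_const b).isBigO_sub.exists_pos
  have hsmall : ∀ᶠ z in 𝓝 (0 : ℂ), ‖C z‖ * ‖b‖ * ‖z‖ < 1 / 2 := by
    have hcont : ContinuousAt (fun z => ‖C z‖ * ‖b‖ * ‖z‖) 0 :=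
      (hC.self_of_nhds.continuousAt.norm.mul_const _).mul continuous_norm.continuousAt
    exact hcont.eventually_lt continuousAt_const (by simp)
  obtain ⟨ε, hε, hball⟩ :=
    eventually_nhds_iff_ball.1 (hC.and (hsmall.and hLbound.bound))
  have hsub : ball (0 : ℂ) (min ε 1) ⊆ ball 0 ε := ball_subset_ball (min_le_left _ _)
  have hunif := tendstoUniformlyOn_mahlerIter hp (min_le_right ε 1) hL.le
    (fun z hz => (hball z (hsub hz)).2.1.le)
    (fun z hz => by simpa [hCb] using (hball z (hsub hz)).2.2)
  refine ⟨min ε 1, lt_min hε one_pos, hunif, ?_⟩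
  refine hunif.tendstoLocallyUniformlyOn.differentiableOn
    (Eventually.of_forall fun m => differentiableOn_mahlerIter (by omega) (min_le_right ε 1)
      (fun z hz => (hball z (hsub hz)).1.differentiableWithinAt) m) isOpen_ball

theorem tendsto_mahlerIter_mahlerLimit (hp : 2 ≤ p)
    (hC : ∀ᶠ z in 𝓝 0, DifferentiableAt ℂ C z) (hCb : C 0 * b = 1) {z : ℂ}
    (hz : z ∈ ball (0 : ℂ) 1) :
    Tendsto (fun m => mahlerIter p C b m z) atTop (𝓝 (mahlerLimit p C b z)) := by
  obtain ⟨ε, hε, hunif, -⟩ := exists_ball_differentiableOn_mahlerLimit hp hC hCb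
  obtain ⟨k, hk⟩ := exists_norm_pow_pow_lt hp (mem_ball_zero_iff.1 hz) hε
  suffices ∃ l, Tendsto (fun m => mahlerIter p C b m z) atTop (𝓝 l) from
    tendsto_nhds_limUnder this
  induction k generalizing z with
  | zero => exact ⟨_, hunif.tendsto_at (by simpa using hk)⟩
  | succ k ih =>
    obtain ⟨l, hl⟩ :=
      ih (mapsTo_pow_ball (p := p) (by omega) le_rfl hz) (by rwa [← pow_mul, ← pow_succ'])
    exact ⟨_, tendsto_mahlerIter_of_tendsto_pow hl⟩

theorem mahlerLimit_eq (hp : 2 ≤ p) (hC : ∀ᶠ z in 𝓝 0, DifferentiableAt ℂ C z)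
    (hCb : C 0 * b = 1) {z : ℂ} (hz : z ∈ ball (0 : ℂ) 1) :
    mahlerLimit p C b z = C z * mahlerLimit p C b (z ^ p) * b :=
  tendsto_nhds_unique (tendsto_mahlerIter_mahlerLimit hp hC hCb hz)
    (tendsto_mahlerIter_of_tendsto_pow (tendsto_mahlerIter_mahlerLimit hp hC hCb
      (mapsTo_pow_ball (p := p) (by omega) le_rfl hz)))

end Normed

end MahlerIteration

section MatrixFunctions

variable {ι : Type*} [Fintype ι] {B : ℂ → Matrix ι ι ℂ} {x : ℂ}

lemma meromorphicAt_mul_apply {A : ℂ → Matrix ι ι ℂ}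
    (hA : ∀ i j, MeromorphicAt (fun z => A z i j) x)
    (hB : ∀ i j, MeromorphicAt (fun z => B z i j) x) (i j : ι) :
    MeromorphicAt (fun z => (A z * B z) i j) x := by
  simp only [Matrix.mul_apply]
  fun_prop

variable [DecidableEq ι]

lemma meromorphicAt_det (hB : ∀ i j, MeromorphicAt (fun z => B z i j) x) :
    MeromorphicAt (fun z => (B z).det) x := by
  simp only [Matrix.det_apply, Units.smul_def]
  exact MeromorphicAt.fun_sum fun σ _ =>
    (MeromorphicAt.fun_prod fun i _ => hB (σ i) i).fun_const_smul _

lemma meromorphicAt_inv_apply (hB : ∀ i j, MeromorphicAt (fun z => B z i j) x) (i j : ι) :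
    MeromorphicAt (fun z => (B z)⁻¹ i j) x := by
  simp only [Matrix.inv_def, Matrix.smul_apply, Ring.inverse_eq_inv, smul_eq_mul,
    Matrix.adjugate_apply]
  refine (meromorphicAt_det hB).inv.mul (meromorphicAt_det fun a c => ?_)
  simp only [Matrix.updateRow_apply]
  split_ifs <;> fun_prop

end MatrixFunctions

lemma analyticAt_ratEval {r : RatFunc ℂ} {z : ℂ} (h : r.denom.eval z ≠ 0) :
    AnalyticAt ℂ (ratEval r) z :=
  (r.num.differentiable.analyticAt z).div (r.denom.differentiable.analyticAt z) h

lemma meromorphicAt_ratEval (r : RatFunc ℂ) (z : ℂ) : MeromorphicAt (ratEval r) z :=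
  (r.num.differentiable.analyticAt z).meromorphicAt.div
    (r.denom.differentiable.analyticAt z).meromorphicAt

attribute [local instance] Matrix.linftyOpNormedAddCommGroup Matrix.linftyOpNormedRing
  Matrix.linftyOpNormedAlgebra

section MatrixNorm

variable {ι : Type*} [Fintype ι] {B : ℂ → Matrix ι ι ℂ} {x : ℂ}

lemma differentiableAt_of_analyticAt_apply (hB : ∀ i j, AnalyticAt ℂ (fun z => B z i j) x) :
    DifferentiableAt ℂ B x :=
  differentiableAt_pi.2 fun i => differentiableAt_pi.2 fun j => (hB i j).differentiableAt

lemma analyticAt_apply_of_differentiableOn {s : Set ℂ} (hB : DifferentiableOn ℂ B s)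
    (hs : s ∈ 𝓝 x) (i j : ι) : AnalyticAt ℂ (fun z => B z i j) x :=
  DifferentiableOn.analyticAt (fun z hz => differentiableWithinAt_pi.1
    (differentiableWithinAt_pi.1 (hB z hz) i) j) hs

variable [DecidableEq ι]

lemma eventually_det_ne_zero_of_analyticAt (hB : ∀ i j, AnalyticAt ℂ (fun z => B z i j) x)
    (hdet : (B x).det ≠ 0) : ∀ᶠ z in 𝓝 x, (B z).det ≠ 0 :=
  (continuous_id.matrix_det.continuousAt.comp
    (differentiableAt_of_analyticAt_apply hB).continuousAt).eventually_ne hdet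

lemma eventually_differentiableAt_inv (hB : ∀ i j, AnalyticAt ℂ (fun z => B z i j) x)
    (hdet : (B x).det ≠ 0) : ∀ᶠ z in 𝓝 x, DifferentiableAt ℂ (fun w => (B w)⁻¹) z := by
  have hAn : ∀ᶠ z in 𝓝 x, ∀ i j, AnalyticAt ℂ (fun w => B w i j) z :=
    eventually_all.2 fun i => eventually_all.2 fun j => (hB i j).eventually_analyticAt
  filter_upwards [hAn, eventually_det_ne_zero_of_analyticAt hB hdet] with z hz hzdet
  simp only [Matrix.nonsing_inv_eq_ringInverse]
  exact (differentiableAt_of_analyticAt_apply hz).inverse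
    ((Matrix.isUnit_iff_isUnit_det _).2 hzdet.isUnit)

lemma eventually_det_ne_zero {U : Set ℂ} (hU : IsPreconnected U)
    (hB : ∀ i j, MeromorphicOn (fun z => B z i j) U) (hx : x ∈ U)
    (hBx : ∀ i j, AnalyticAt ℂ (fun z => B z i j) x) (hdet : (B x).det ≠ 0) {y : ℂ}
    (hy : y ∈ U) : ∀ᶠ z in 𝓝[≠] y, (B z).det ≠ 0 := by
  have hmero : MeromorphicOn (fun z => (B z).det) U := fun z hz =>
    meromorphicAt_det fun i j => hB i j z hz
  have hx' : meromorphicOrderAt (fun z => (B z).det) x ≠ ⊤ :=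
    (meromorphicOrderAt_ne_top_iff_eventually_ne_zero (hmero x hx)).2
      ((eventually_det_ne_zero_of_analyticAt hBx hdet).filter_mono nhdsWithin_le_nhds)
  exact (meromorphicOrderAt_ne_top_iff_eventually_ne_zero (hmero y hy)).1
    (hmero.meromorphicOrderAt_ne_top_of_isPreconnected hU hx hy hx')

variable {p : ℕ}

theorem meromorphicOn_mahlerLimit_apply {C : ℂ → Matrix ι ι ℂ} {b : Matrix ι ι ℂ} (hp : 2 ≤ p)
    (hC : ∀ᶠ z in 𝓝 0, DifferentiableAt ℂ C z) (hCb : C 0 * b = 1)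
    (hCmero : ∀ i j, MeromorphicOn (fun z => C z i j) (ball 0 1)) (i j : ι) :
    MeromorphicOn (fun z => mahlerLimit p C b z i j) (ball 0 1) := by
  obtain ⟨ε, hε, -, hdiff⟩ := exists_ball_differentiableOn_mahlerLimit hp hC hCb
  suffices ∀ k x, x ∈ ball (0 : ℂ) 1 → ‖x ^ p ^ k‖ < ε →
      ∀ i j, MeromorphicAt (fun z => mahlerLimit p C b z i j) x from fun x hx =>
    have ⟨k, hk⟩ := exists_norm_pow_pow_lt hp (mem_ball_zero_iff.1 hx) hε
    this k x hx hk i j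
  intro k
  induction k with
  | zero =>
    exact fun x _ hx i j => (analyticAt_apply_of_differentiableOn hdiff
      (isOpen_ball.mem_nhds (by simpa using hx)) i j).meromorphicAt
  | succ k ih =>
    intro x hx hk i j
    have hFp : ∀ k l, MeromorphicAt (fun z => mahlerLimit p C b (z ^ p) k l) x := fun k l =>
      (ih _ (mapsTo_pow_ball (p := p) (by omega) le_rfl hx) (by rwa [← pow_mul, ← pow_succ'])
        k l).comp_analyticAt (g := fun z => z ^ p) (by fun_prop)
    refine (meromorphicAt_mul_apply (meromorphicAt_mul_apply (fun k l => hCmero k l x hx) hFp)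
      (B := fun _ => b) (fun k l => .const (b k l) x) i j).congr ?_
    filter_upwards [nhdsWithin_le_nhds (isOpen_ball.mem_nhds hx)] with z hz
    exact congrArg (fun M : Matrix ι ι ℂ => M i j) (mahlerLimit_eq hp hC hCb hz).symm

theorem mul_mahlerLimit_eq (hp : 2 ≤ p)
    (hB : ∀ i j, MeromorphicOn (fun z => B z i j) (ball 0 1))
    (hB0 : ∀ i j, AnalyticAt ℂ (fun z => B z i j) 0) (hdet : (B 0).det ≠ 0) {z : ℂ}
    (hz : z ∈ ball (0 : ℂ) 1) (hBz : ∀ i j, AnalyticAt ℂ (fun w => B w i j) z)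
    (hFz : ∀ i j, AnalyticAt ℂ (fun w => mahlerLimit p (fun w => (B w)⁻¹) (B 0) w i j) z)
    (hFzp :
      ∀ i j, AnalyticAt ℂ (fun w => mahlerLimit p (fun w => (B w)⁻¹) (B 0) w i j) (z ^ p)) :
    B z * mahlerLimit p (fun w => (B w)⁻¹) (B 0) z =
      mahlerLimit p (fun w => (B w)⁻¹) (B 0) (z ^ p) * B 0 := by
  set F := mahlerLimit p (fun w => (B w)⁻¹) (B 0)
  have hCb : (B 0)⁻¹ * B 0 = 1 := Matrix.nonsing_inv_mul _ hdet.isUnit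
  have hF : ∀ w ∈ ball (0 : ℂ) 1, F w = (B w)⁻¹ * F (w ^ p) * B 0 :=
    fun w hw => mahlerLimit_eq hp (eventually_differentiableAt_inv hB0 hdet) hCb hw
  have hev : ∀ᶠ w in 𝓝[≠] z, B w * F w = F (w ^ p) * B 0 := by
    filter_upwards [eventually_det_ne_zero isPreconnected_ball hB (mem_ball_self one_pos) hB0
      hdet hz, nhdsWithin_le_nhds (isOpen_ball.mem_nhds hz)] with w hwdet hw
    rw [hF w hw, ← mul_assoc, ← mul_assoc, Matrix.mul_nonsing_inv _ hwdet.isUnit, one_mul]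
  have hlhs : ContinuousAt (fun w => B w * F w) z :=
    ((differentiableAt_of_analyticAt_apply hBz).mul
      (differentiableAt_of_analyticAt_apply hFz)).continuousAt
  have hrhs : ContinuousAt (fun w => F (w ^ p) * B 0) z :=
    (((differentiableAt_of_analyticAt_apply hFzp).comp z (differentiableAt_pow p)).mul_const
      _).continuousAt
  exact ((hlhs.eventuallyEq_nhds_iff_eventuallyEq_nhdsNE hrhs).1 hev).eq_of_nhds

end MatrixNorm

/-- Let `p ≥ 2` and let `A` be an `n×n` matrix of rational functions
that is regular at `0` (no entry has a pole at `0`, and `A(0)` is invertible). Then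
there is an `n×n` matrix `F` of meromorphic functions on the open unit disk,
holomorphic at `0` with `F(0) = 1` and determinant not identically zero, such that
`A(z)·F(z) = F(z^p)·A(0)` as meromorphic matrices on `D(0,1)`. -/
theorem mahler_meromorphic_fundamental_solution_at_zero
    (p n : ℕ) (hp : 2 ≤ p)
    (A : Matrix (Fin n) (Fin n) (RatFunc ℂ))
    (hnopole : ∀ i j, Polynomial.eval (0 : ℂ) (A i j).denom ≠ 0)
    (hA0 : IsUnit (Matrix.of fun i j => ratEval (A i j) 0).det) :
    ∃ F : Matrix (Fin n) (Fin n) (ℂ → ℂ),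
      (∀ i j, MeromorphicOn (F i j) (ball (0 : ℂ) 1)) ∧
      (∀ i j, AnalyticAt ℂ (F i j) 0) ∧
      (Matrix.of fun i j => F i j 0) = 1 ∧
      (∃ z ∈ ball (0 : ℂ) 1, (∀ i j, AnalyticAt ℂ (F i j) z) ∧
        (Matrix.of fun i j => F i j z).det ≠ 0) ∧
      ∀ z ∈ ball (0 : ℂ) 1,
        (∀ i j, Polynomial.eval z (A i j).denom ≠ 0) →
        (∀ i j, AnalyticAt ℂ (F i j) z) →
        (∀ i j, AnalyticAt ℂ (F i j) (z ^ p)) →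
        (Matrix.of fun i j => ratEval (A i j) z) * (Matrix.of fun i j => F i j z)
          = (Matrix.of fun i j => F i j (z ^ p)) *
            (Matrix.of fun i j => ratEval (A i j) 0) := by
  set B : ℂ → Matrix (Fin n) (Fin n) ℂ := fun z => Matrix.of fun i j => ratEval (A i j) z
  have hB : ∀ i j, MeromorphicOn (fun z => B z i j) (ball 0 1) := fun i j z _ =>
    meromorphicAt_ratEval (A i j) z
  have hB0 : ∀ i j, AnalyticAt ℂ (fun z => B z i j) 0 := fun i j =>
    analyticAt_ratEval (hnopole i j)
  have hC := eventually_differentiableAt_inv hB0 hA0.ne_zero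
  have hCb : (B 0)⁻¹ * B 0 = 1 := Matrix.nonsing_inv_mul _ hA0
  set F := mahlerLimit p (fun z => (B z)⁻¹) (B 0)
  obtain ⟨ε, hε, -, hdiff⟩ := exists_ball_differentiableOn_mahlerLimit hp hC hCb
  have hF0 : ∀ i j, AnalyticAt ℂ (fun z => F z i j) 0 :=
    analyticAt_apply_of_differentiableOn hdiff (ball_mem_nhds 0 hε)
  have hF1 : F 0 = 1 := mahlerLimit_apply_zero (by omega) hCb
  refine ⟨Matrix.of fun i j z => F z i j,
    meromorphicOn_mahlerLimit_apply hp hC hCb fun i j z hz =>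
      meromorphicAt_inv_apply (fun k l => hB k l z hz) i j,
    hF0, hF1, ⟨0, mem_ball_self one_pos, hF0, show (F 0).det ≠ 0 by simp [hF1]⟩, ?_⟩
  intro z hz hden hFz hFzp
  exact mul_mahlerLimit_eq hp hB hB0 hA0.ne_zero hz (fun i j => analyticAt_ratEval (hden i j))
    hFz hFzp
end

section
/- Let p ≥ 2 be an integer, A₀ ∈ GL_{n₁}(ℂ) and B₀ ∈ GL_{n₂}(ℂ). Let T be an n₂×n₁ matrix with entries in the field ℂ((z)) of formal Laurent series, written T(z) = Σ_{k ≥ N} T_k z^k with matrix coefficients T_k ∈ M_{n₂,n₁}(ℂ). If Σ_k T_k·A₀·z^{pk} = Σ_k B₀·T_k·z^k (i.e. T(z^p)·A₀ = B₀·T(z)), then T_k = 0 for every k ≠ 0; in particular T is a constant matrix, T = T₀ ∈ M_{n₂,n₁}(ℂ). -/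
/-- Let `p ≥ 2`, `A₀ ∈ GL_{n₁}(ℂ)`, `B₀ ∈ GL_{n₂}(ℂ)`, and let
`T = Σ_{k ≥ N} T_k z^k` be an `n₂×n₁` matrix of formal Laurent series (encoded by its
coefficient family `T : ℤ → M_{n₂,n₁}(ℂ)`, vanishing for `k < N`). If
`T(z^p)·A₀ = B₀·T(z)`, i.e. for every `k : ℤ` the coefficient identity
`B₀·T_k = T_{k/p}·A₀` if `p ∣ k` and `B₀·T_k = 0` otherwise holds, then `T_k = 0` for
every `k ≠ 0`; in particular `T` is the constant matrix `T₀`. -/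
theorem morphism_between_constant_systems_at_zero_is_constant
    (p : ℕ) (hp : 2 ≤ p) (n₁ n₂ : ℕ)
    (A₀ : Matrix (Fin n₁) (Fin n₁) ℂ) (hA₀ : IsUnit A₀.det)
    (B₀ : Matrix (Fin n₂) (Fin n₂) ℂ) (hB₀ : IsUnit B₀.det)
    (T : ℤ → Matrix (Fin n₂) (Fin n₁) ℂ)
    (hLaurent : ∃ N : ℤ, ∀ k < N, T k = 0)
    (heq : ∀ k : ℤ,
      B₀ * T k = if (p : ℤ) ∣ k then T (k / (p : ℤ)) * A₀ else 0) :
    ∀ k : ℤ, k ≠ 0 → T k = 0 := by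
  obtain ⟨uB, huB⟩ := (Matrix.isUnit_iff_isUnit_det B₀).mpr hB₀
  have key : ∀ k : ℤ, B₀ * T k = 0 → T k = 0 := by
    intro k h
    have h2 : (↑uB⁻¹ : Matrix (Fin n₂) (Fin n₂) ℂ) * (B₀ * T k) = 0 := by
      rw [h, Matrix.mul_zero]
    rwa [← Matrix.mul_assoc, ← huB, Units.inv_mul, Matrix.one_mul] at h2
  have main : ∀ n : ℕ, ∀ k : ℤ, k.natAbs = n → k ≠ 0 → T k = 0 := by
    intro n
    induction n using Nat.strong_induction_on with
    | _ n ih =>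
      intro k hkn hk
      apply key
      rw [heq k]
      by_cases hdvd : (p : ℤ) ∣ k
      · rw [if_pos hdvd]
        obtain ⟨m, hm⟩ := hdvd
        have hp0 : (p : ℤ) ≠ 0 := by positivity
        have hdiv : k / (p : ℤ) = m := by rw [hm, Int.mul_ediv_cancel_left _ hp0]
        have hm0 : m ≠ 0 := by rintro rfl; simp at hm; exact hk hm
        have hlt : m.natAbs < n := by
          rw [← hkn, hm, Int.natAbs_mul, Int.natAbs_natCast]
          have : 1 ≤ m.natAbs := Nat.one_le_iff_ne_zero.mpr (Int.natAbs_ne_zero.mpr hm0)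
          calc m.natAbs = 1 * m.natAbs := (one_mul _).symm
            _ < p * m.natAbs := by
                apply Nat.mul_lt_mul_of_lt_of_le (by omega) le_rfl
                omega
        rw [hdiv, ih m.natAbs hlt m rfl hm0, Matrix.zero_mul]
      · rw [if_neg hdvd]
  intro k hk
  exact main k.natAbs k rfl hk
end

section
/- Let p ≥ 2 be an integer, A_∞ ∈ GL_{n₁}(ℂ) and B_∞ ∈ GL_{n₂}(ℂ). Let T be an n₂×n₁ matrix with entries in the field ℂ((1/z)) of formal Laurent series in 1/z, written T = Σ_{k ≥ N} T_k z^{-k} with matrix coefficients T_k ∈ M_{n₂,n₁}(ℂ) (only finitely many positive powers of z occur). If T(z^p)·A_∞ = B_∞·T(z), where T(z^p) is obtained by substituting z^p for z in every entry, then T is a constant matrix in M_{n₂,n₁}(ℂ). -/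
/-!
Comparing coefficients of `z^{-k}`, the equation says `B_∞ T_k = 0` when `p ∤ k` and
`B_∞ T_{pq} = T_q A_∞`. As `B_∞` is invertible, `T_k` vanishes for `k > 0` by strong induction,
because `0 < q < pq`. As `A_∞` is invertible, `T_{pk} = 0` forces `T_k = 0`; for `k < 0` the
coefficient `T_{p^n k}` vanishes once `p^n k` lies below the valuation of `T`, and this
propagates back to `T_k`.
-/

namespace MahlerSystem

open Function

variable {m n R : Type*} [Fintype m] [Fintype n] [NonUnitalNonAssocSemiring R]
  {p : ℕ} {A : Matrix n n R} {B : Matrix m m R} {T : ℤ → Matrix m n R}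

theorem mul_coeff_mul_eq (hp : p ≠ 0)
    (heq : ∀ k : ℤ, B * T k = if (p : ℤ) ∣ k then T (k / p) * A else 0) (q : ℤ) :
    B * T (p * q) = T q * A := by
  simpa [Int.mul_ediv_cancel_left q (Int.natCast_ne_zero.mpr hp)] using heq (p * q)

theorem coeff_eq_zero_of_pos (hp : 2 ≤ p) (hB : Injective fun M : Matrix m n R => B * M)
    (heq : ∀ k : ℤ, B * T k = if (p : ℤ) ∣ k then T (k / p) * A else 0) {k : ℤ} (hk : 0 < k) :
    T k = 0 := by
  suffices B * T k = 0 from hB (this.trans (Matrix.mul_zero B).symm)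
  lift k to ℕ using hk.le
  induction k using Nat.strong_induction_on with
  | _ k ih =>
    by_cases hdvd : (p : ℤ) ∣ k
    · obtain ⟨q, hq⟩ := hdvd
      have hq_pos : 0 < q := by nlinarith
      lift q to ℕ using hq_pos.le
      have hTq : T q = 0 := hB <| (ih q (by zify; nlinarith) (by exact_mod_cast hq_pos)).trans
        (Matrix.mul_zero B).symm
      rw [hq, mul_coeff_mul_eq (by omega) heq, hTq, Matrix.zero_mul]
    · rw [heq, if_neg hdvd]

theorem coeff_eq_zero_of_coeff_pow_mul_eq_zero (hp : p ≠ 0)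
    (hA : Injective fun M : Matrix m n R => M * A)
    (heq : ∀ k : ℤ, B * T k = if (p : ℤ) ∣ k then T (k / p) * A else 0) (j : ℕ) {k : ℤ}
    (hk : T ((p : ℤ) ^ j * k) = 0) : T k = 0 := by
  induction j generalizing k with
  | zero => simpa using hk
  | succ j ih =>
    have hTpk : T (p * k) = 0 := ih (by rwa [pow_succ, mul_assoc] at hk)
    refine hA (show T k * A = 0 * A from ?_)
    rw [← mul_coeff_mul_eq hp heq, hTpk, Matrix.mul_zero, Matrix.zero_mul]

theorem coeff_eq_zero_of_neg (hp : 2 ≤ p) (hA : Injective fun M : Matrix m n R => M * A)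
    (hLaurent : ∃ N : ℤ, ∀ k < N, T k = 0)
    (heq : ∀ k : ℤ, B * T k = if (p : ℤ) ∣ k then T (k / p) * A else 0) {k : ℤ} (hk : k < 0) :
    T k = 0 := by
  obtain ⟨N, hN⟩ := hLaurent
  obtain ⟨j, hj⟩ := pow_unbounded_of_one_lt (-N) (by exact_mod_cast hp : (1 : ℤ) < p)
  refine coeff_eq_zero_of_coeff_pow_mul_eq_zero (by omega) hA heq j (hN _ ?_)
  have : (0 : ℤ) < (p : ℤ) ^ j := by positivity
  nlinarith

end MahlerSystem

/-- Let `p ≥ 2`, `A_∞ ∈ GL_{n₁}(ℂ)`, `B_∞ ∈ GL_{n₂}(ℂ)`, and let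
`T = Σ_{k ≥ N} T_k z^{-k}` be an `n₂×n₁` matrix of formal Laurent series in `1/z`
(encoded by the coefficient family `T : ℤ → M_{n₂,n₁}(ℂ)` of the powers `z^{-k}`,
vanishing for `k < N`, so only finitely many positive powers of `z` occur). The
substitution `z ↦ z^p` sends `z^{-k}` to `z^{-pk}`. If `T(z^p)·A_∞ = B_∞·T(z)`, i.e.
for every `k : ℤ` one has `B_∞·T_k = T_{k/p}·A_∞` if `p ∣ k` and `B_∞·T_k = 0`
otherwise, then `T` is a constant matrix: `T_k = 0` for every `k ≠ 0`. -/
theorem morphism_between_constant_systems_at_infinity_is_constant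
    (p : ℕ) (hp : 2 ≤ p) (n₁ n₂ : ℕ)
    (Ainf : Matrix (Fin n₁) (Fin n₁) ℂ) (hAinf : IsUnit Ainf.det)
    (Binf : Matrix (Fin n₂) (Fin n₂) ℂ) (hBinf : IsUnit Binf.det)
    (T : ℤ → Matrix (Fin n₂) (Fin n₁) ℂ)
    (hLaurent : ∃ N : ℤ, ∀ k < N, T k = 0)
    (heq : ∀ k : ℤ,
      Binf * T k = if (p : ℤ) ∣ k then T (k / (p : ℤ)) * Ainf else 0) :
    ∀ k : ℤ, k ≠ 0 → T k = 0 := by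
  have hA := Matrix.mul_left_injective_of_inv (l := Fin n₂) _ _ (Ainf.mul_nonsing_inv hAinf)
  have hB := Matrix.mul_right_injective_of_inv (l := Fin n₁) _ _ (Binf.nonsing_inv_mul hBinf)
  intro k hk
  rcases hk.lt_or_gt with hneg | hpos
  · exact MahlerSystem.coeff_eq_zero_of_neg hp hA hLaurent heq hneg
  · exact MahlerSystem.coeff_eq_zero_of_pos hp hB heq hpos
end

section
/- Let p ≥ 2 be an integer, A₁ ∈ GL_{n₁}(ℂ) and B₁ ∈ GL_{n₂}(ℂ). Let S be an n₂×n₁ matrix of functions, each entry meromorphic at 0 (i.e. meromorphic on a punctured neighborhood of 0 in ℂ with at worst a pole at 0), such that S(p·z)·A₁ = B₁·S(z) for all z in a punctured neighborhood of 0 at which both sides are defined. Then each entry of S agrees, on a punctured neighborhood of 0, with a Laurent polynomial (an element of ℂ[z, z⁻¹]). -/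
/-!
Multiply `S` by a power `z ^ N` killing all poles: `G z = z ^ N • S z` is analytic at `0`, and
the functional equation becomes `G (p z) = T (G z)` for the linear map
`T C = p ^ N • B₁ * C * A₁⁻¹` on matrices. Comparing Taylor coefficients, the `k`-th
coefficient of `G` is either zero or an eigenvector of `T` for the eigenvalue `p ^ k`. These
eigenvalues are pairwise distinct since `p ≥ 2`, and `T` has only finitely many, so `G` is a
polynomial and `S = z ^ (-N) • G` is a Laurent polynomial.
-/

open Filter Topology

theorem Module.End.finite_setOf_ne_zero_of_apply_eq_smul {K V ι : Type*} [Field K]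
    [AddCommGroup V] [Module K V] [FiniteDimensional K V] (T : Module.End K V) {c : ι → V}
    {μ : ι → K} (hμ : Function.Injective μ) (hc : ∀ i, T (c i) = μ i • c i) :
    {i | c i ≠ 0}.Finite :=
  (T.finite_hasEigenvalue.preimage hμ.injOn).subset fun i hi =>
    hasEigenvalue_of_hasEigenvector ⟨mem_eigenspace_iff.2 (hc i), hi⟩

theorem eq_of_hasSum_pow_smul_of_eventuallyEq {𝕜 E : Type*} [NontriviallyNormedField 𝕜]
    [NormedAddCommGroup E] [NormedSpace 𝕜 E] {a b : ℕ → E} {f g : 𝕜 → E}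
    (ha : ∀ᶠ z in 𝓝 0, HasSum (fun n => z ^ n • a n) (f z))
    (hb : ∀ᶠ z in 𝓝 0, HasSum (fun n => z ^ n • b n) (g z)) (hfg : f =ᶠ[𝓝[≠] 0] g) :
    a = b := by
  let P : (ℕ → E) → FormalMultilinearSeries 𝕜 𝕜 E :=
    fun a n => ContinuousMultilinearMap.mkPiRing 𝕜 (Fin n) (a n)
  have hcoeff (a : ℕ → E) (n : ℕ) : (P a).coeff n = a n := by
    simp [P, FormalMultilinearSeries.coeff]
  have hP {a : ℕ → E} {f : 𝕜 → E} (ha : ∀ᶠ z in 𝓝 0, HasSum (fun n => z ^ n • a n) (f z)) :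
      HasFPowerSeriesAt f (P a) 0 :=
    hasFPowerSeriesAt_iff.2 (by simpa only [hcoeff, zero_add] using ha)
  have hPab := (hP ha).eq_formalMultilinearSeries_of_eventually (hP hb)
    (((hP ha).continuousAt.eventuallyEq_nhds_iff_eventuallyEq_nhdsNE (hP hb).continuousAt).1 hfg)
  funext n
  rw [← hcoeff a, ← hcoeff b, hPab]

theorem pow_smul_coeff_eq_apply_of_hasSum {𝕜 E : Type*} [NontriviallyNormedField 𝕜]
    [NormedAddCommGroup E] [NormedSpace 𝕜 E] {G : 𝕜 → E} {c : ℕ → E}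
    (hc : ∀ᶠ z in 𝓝 0, HasSum (fun n => z ^ n • c n) (G z)) (q : 𝕜) (T : E →L[𝕜] E)
    (hG : ∀ᶠ z in 𝓝[≠] 0, G (q * z) = T (G z)) (n : ℕ) : q ^ n • c n = T (c n) := by
  have hq : Tendsto (fun z => q * z) (𝓝 0) (𝓝 0) := by
    simpa using (continuous_const_mul q).tendsto 0
  have hleft : ∀ᶠ z in 𝓝 0, HasSum (fun n => z ^ n • q ^ n • c n) (G (q * z)) := by
    filter_upwards [hq.eventually hc] with z hz
    simpa only [smul_smul, mul_pow, mul_comm] using hz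
  have hright : ∀ᶠ z in 𝓝 0, HasSum (fun n => z ^ n • T (c n)) (T (G z)) := by
    filter_upwards [hc] with z hz
    simpa only [map_smul] using T.hasSum hz
  exact congrFun (eq_of_hasSum_pow_smul_of_eventuallyEq hleft hright hG) n

theorem exists_finsupp_eventually_eq_sum_zpow {𝕜 : Type*} [Field 𝕜] [TopologicalSpace 𝕜]
    [T2Space 𝕜] {f : 𝕜 → 𝕜} {a : ℕ → 𝕜} (ha : a.support.Finite) (N : ℕ)
    (hf : ∀ᶠ z in 𝓝 0, HasSum (fun n => z ^ n * a n) (z ^ N * f z)) :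
    ∃ c : ℤ →₀ 𝕜, ∀ᶠ z in 𝓝[≠] 0, f z = c.sum fun k b => b * z ^ k := by
  refine ⟨∑ n ∈ ha.toFinset, Finsupp.single ((n : ℤ) - N) (a n), ?_⟩
  filter_upwards [eventually_nhdsWithin_of_eventually_nhds hf, self_mem_nhdsWithin]
    with z hz (hz0 : z ≠ 0)
  have hpoly : z ^ N * f z = ∑ n ∈ ha.toFinset, z ^ n * a n :=
    hz.unique (hasSum_sum_of_ne_finset_zero fun n hn => by simp_all)
  rw [← Finsupp.sum_finsetSum_index (fun _ => zero_mul _) (fun _ _ _ => add_mul _ _ _),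
    eq_div_of_mul_eq (pow_ne_zero N hz0) ((mul_comm _ _).trans hpoly), Finset.sum_div]
  refine Finset.sum_congr rfl fun n _ => ?_
  rw [Finsupp.sum_single_index (zero_mul _), zpow_sub₀ hz0, zpow_natCast, zpow_natCast]
  ring

theorem MeromorphicAt.eventually_analyticAt_pow_smul {𝕜 E : Type*} [NontriviallyNormedField 𝕜]
    [NormedAddCommGroup E] [NormedSpace 𝕜 E] {f : 𝕜 → E} (hf : MeromorphicAt f 0) :
    ∀ᶠ N in atTop, AnalyticAt 𝕜 (fun z => z ^ N • f z) 0 := by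
  obtain ⟨k, hk⟩ := hf
  filter_upwards [eventually_ge_atTop k] with N hN
  refine ((analyticAt_id.pow (N - k)).smul hk).congr (Eventually.of_forall fun z => ?_)
  simp only [Pi.smul_apply', Pi.pow_apply, id_eq, sub_zero, smul_smul, ← pow_add,
    Nat.sub_add_cancel hN]

attribute [local instance] Matrix.normedAddCommGroup Matrix.normedSpace

theorem Matrix.exists_hasSum_pow_smul_of_meromorphicAt {m n 𝕜 : Type*} [Fintype m] [Fintype n]
    [NontriviallyNormedField 𝕜] {S : Matrix m n (𝕜 → 𝕜)} (hS : ∀ i j, MeromorphicAt (S i j) 0) :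
    ∃ (N : ℕ) (c : ℕ → Matrix m n 𝕜),
      ∀ᶠ z in 𝓝 0, HasSum (fun k => z ^ k • c k) (z ^ N • Matrix.of fun i j => S i j z) := by
  obtain ⟨N, hN⟩ := (eventually_all.2 fun i => eventually_all.2 fun j =>
    (hS i j).eventually_analyticAt_pow_smul).exists
  obtain ⟨P, hP⟩ : AnalyticAt 𝕜 (fun z => z ^ N • Matrix.of fun i j => S i j z) 0 :=
    AnalyticAt.pi fun i => AnalyticAt.pi fun j => hN i j
  have hsum := hasFPowerSeriesAt_iff.1 hP
  simp only [zero_add] at hsum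
  exact ⟨N, P.coeff, hsum⟩

theorem morphism_between_constant_systems_at_one_is_laurent_polynomial_general
    (p : ℕ) (hp : 2 ≤ p) (n₁ n₂ : ℕ)
    (A₁ : Matrix (Fin n₁) (Fin n₁) ℂ) (hA₁ : IsUnit A₁.det)
    (B₁ : Matrix (Fin n₂) (Fin n₂) ℂ)
    (S : Matrix (Fin n₂) (Fin n₁) (ℂ → ℂ))
    (hS : ∀ i j, MeromorphicAt (S i j) 0)
    (heq : ∀ᶠ z in 𝓝[≠] (0 : ℂ),
      (Matrix.of fun i j => S i j ((p : ℂ) * z)) * A₁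
        = B₁ * (Matrix.of fun i j => S i j z)) :
    ∀ i j, ∃ c : ℤ →₀ ℂ,
      ∀ᶠ z in 𝓝[≠] (0 : ℂ), S i j z = c.sum fun k a => a * z ^ k := by
  obtain ⟨N, c, hc⟩ := Matrix.exists_hasSum_pow_smul_of_meromorphicAt hS
  let T : Matrix (Fin n₂) (Fin n₁) ℂ →L[ℂ] Matrix (Fin n₂) (Fin n₁) ℂ :=
    LinearMap.toContinuousLinearMap ((p : ℂ) ^ N •
      (mulLeftLinearMap _ ℂ B₁ ∘ₗ mulRightLinearMap _ ℂ A₁⁻¹))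
  have hG : ∀ᶠ z in 𝓝[≠] (0 : ℂ),
      ((p : ℂ) * z) ^ N • Matrix.of (fun i j => S i j ((p : ℂ) * z))
        = T (z ^ N • Matrix.of fun i j => S i j z) := by
    filter_upwards [heq] with z hz
    rw [← Matrix.mul_one (Matrix.of _), ← Matrix.mul_nonsing_inv A₁ hA₁, ← Matrix.mul_assoc, hz]
    simp only [T, LinearMap.coe_toContinuousLinearMap', LinearMap.smul_apply, LinearMap.comp_apply,
      mulLeftLinearMap_apply, mulRightLinearMap_apply, Matrix.smul_mul, Matrix.mul_smul, smul_smul,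
      mul_pow, Matrix.mul_assoc, mul_comm]
  have hpow : Function.Injective fun k : ℕ => (p : ℂ) ^ k :=
    fun k l h => Nat.pow_right_injective hp (by simp only at h; exact_mod_cast h)
  have hfin : {k | c k ≠ 0}.Finite :=
    Module.End.finite_setOf_ne_zero_of_apply_eq_smul T.toLinearMap hpow fun k =>
      (pow_smul_coeff_eq_apply_of_hasSum hc _ T hG k).symm
  intro i j
  refine exists_finsupp_eventually_eq_sum_zpow (a := fun k => c k i j)
    (hfin.subset fun k hk hck => hk (by simp [hck])) N ?_
  filter_upwards [hc] with z hz
  simpa using Pi.hasSum.1 (Pi.hasSum.1 hz i) j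

/-- Let `p ≥ 2`, `A₁ ∈ GL_{n₁}(ℂ)`, `B₁ ∈ GL_{n₂}(ℂ)`, and let `S`
be an `n₂×n₁` matrix of functions meromorphic at `0` such that
`S(p·z)·A₁ = B₁·S(z)` on a punctured neighborhood of `0`. Then each entry of `S`
agrees, on a punctured neighborhood of `0`, with a Laurent polynomial
`z ↦ Σ_k c_k z^k` (finite sum, `k ∈ ℤ`). -/
theorem morphism_between_constant_systems_at_one_is_laurent_polynomial
    (p : ℕ) (hp : 2 ≤ p) (n₁ n₂ : ℕ)
    (A₁ : Matrix (Fin n₁) (Fin n₁) ℂ) (hA₁ : IsUnit A₁.det)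
    (B₁ : Matrix (Fin n₂) (Fin n₂) ℂ) (hB₁ : IsUnit B₁.det)
    (S : Matrix (Fin n₂) (Fin n₁) (ℂ → ℂ))
    (hS : ∀ i j, MeromorphicAt (S i j) 0)
    (heq : ∀ᶠ z in 𝓝[≠] (0 : ℂ),
      (Matrix.of fun i j => S i j ((p : ℂ) * z)) * A₁
        = B₁ * (Matrix.of fun i j => S i j z)) :
    ∀ i j, ∃ c : ℤ →₀ ℂ,
      ∀ᶠ z in 𝓝[≠] (0 : ℂ), S i j z = c.sum fun k a => a * z ^ k :=
  morphism_between_constant_systems_at_one_is_laurent_polynomial_general p hp n₁ n₂ A₁ hA₁ B₁ S hS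
    heq
end

section
/- Let C⁽⁰⁾, C⁽^∞⁾ ∈ GLₙ(ℂ(z)) be two invertible matrices of rational functions over ℂ. Then there exists U ∈ GLₙ(ℂ(z)) such that U·C⁽⁰⁾ is regular at 0 (no entry has a pole at 0 and its value at 0 is invertible) and U·C⁽^∞⁾ is regular at ∞ (the matrix obtained by substituting 1/w for z is regular at w = 0). -/
/-- The substitution `z ↦ 1/w` on rational functions: `r(z) ↦ r(1/w)`. -/
noncomputable def invSubst (r : RatFunc ℂ) : RatFunc ℂ :=
  r.eval (algebraMap ℂ (RatFunc ℂ)) (RatFunc.X)⁻¹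

/-- A square matrix of rational functions is regular at the point `c ∈ ℂ`:
no entry has a pole at `c` and its value at `c` is invertible. -/
def RegularAtPt {n : ℕ} (C : Matrix (Fin n) (Fin n) (RatFunc ℂ)) (c : ℂ) : Prop :=
  (∀ i j, Polynomial.eval c (C i j).denom ≠ 0) ∧
    IsUnit (Matrix.of fun i j => ratEval (C i j) c).det

/-- A square matrix of rational functions is regular at `∞`: the matrix obtained by
the substitution `z ↦ 1/w` is regular at `w = 0`. -/
def RegularAtInfty {n : ℕ} (C : Matrix (Fin n) (Fin n) (RatFunc ℂ)) : Prop :=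
  RegularAtPt (Matrix.of fun i j => invSubst (C i j)) 0

open Filter Polynomial

noncomputable section

namespace RatFunc

variable {K : Type*} [Field K]

theorem eval_denom_ne_zero_of_dvd {c : K} {x : RatFunc K} {q : K[X]} (h : x.denom ∣ q)
    (hq : q.eval c ≠ 0) : x.denom.eval c ≠ 0 :=
  mt (eval_eq_zero_of_dvd_of_eval_eq_zero h) hq

def regularAt (c : K) : Subring (RatFunc K) where
  carrier := {r | r.denom.eval c ≠ 0}
  mul_mem' {x y} hx hy :=
    eval_denom_ne_zero_of_dvd (denom_mul_dvd x y) (by simpa using mul_ne_zero hx hy)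
  add_mem' {x y} hx hy :=
    eval_denom_ne_zero_of_dvd (denom_add_dvd x y) (by simpa using mul_ne_zero hx hy)
  one_mem' := by simp
  zero_mem' := by simp
  neg_mem' {x} hx := eval_denom_ne_zero_of_dvd
    ((denom_dvd x.denom_ne_zero).mpr ⟨-x.num, by rw [map_neg, neg_div, num_div_denom]⟩) hx

theorem mem_regularAt {c : K} {r : RatFunc K} : r ∈ regularAt c ↔ r.denom.eval c ≠ 0 :=
  Iff.rfl

def evalRegularAt (c : K) : regularAt c →+* K where
  toFun r := (r : RatFunc K).eval (RingHom.id K) c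
  map_one' := eval_one _ _
  map_mul' x y := eval_mul _ _ x.2 y.2
  map_zero' := eval_zero _ _
  map_add' x y := eval_add _ _ x.2 y.2

@[simp]
theorem evalRegularAt_apply (c : K) (r : regularAt c) :
    evalRegularAt c r = (r : RatFunc K).eval (RingHom.id K) c := rfl

theorem algebraMap_mem_regularAt (c : K) (p : K[X]) :
    algebraMap K[X] (RatFunc K) p ∈ regularAt c := by
  simp [mem_regularAt]

theorem inv_algebraMap_mem_regularAt {c : K} {q : K[X]} (hq : q.eval c ≠ 0) :
    (algebraMap K[X] (RatFunc K) q)⁻¹ ∈ regularAt c :=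
  eval_denom_ne_zero_of_dvd
    ((denom_dvd (fun h => hq (by simp [h]))).mpr ⟨1, by rw [map_one, one_div]⟩) hq

theorem exists_X_pow_mul_mem_regularAt_zero (r : RatFunc K) :
    ∃ k : ℕ, X ^ k * r ∈ regularAt (0 : K) := by
  obtain ⟨q, hdenom, hq⟩ :=
    r.denom.exists_eq_pow_rootMultiplicity_mul_and_not_dvd r.denom_ne_zero 0
  rw [map_zero, sub_zero] at hdenom hq
  set k := r.denom.rootMultiplicity 0
  refine ⟨k, ?_⟩
  have hq0 : algebraMap K[X] (RatFunc K) q ≠ 0 := algebraMap_ne_zero (by rintro rfl; simp at hq)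
  have hXr : X ^ k * r =
      algebraMap K[X] (RatFunc K) r.num * (algebraMap K[X] (RatFunc K) q)⁻¹ := by
    conv_lhs => rw [← num_div_denom r, hdenom, map_mul, map_pow, algebraMap_X]
    field_simp [X_ne_zero]
  rw [hXr]
  exact mul_mem (algebraMap_mem_regularAt 0 _)
    (inv_algebraMap_mem_regularAt (by rwa [← coeff_zero_eq_eval_zero, ne_eq, ← X_dvd_iff]))

theorem det_ne_zero_of_forall_mem_regularAt {ι : Type*} [Fintype ι] [DecidableEq ι] {c : K}
    {M : Matrix ι ι (RatFunc K)} (hM : ∀ i j, M i j ∈ regularAt c)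
    (hdet : (M.map (eval (RingHom.id K) c)).det ≠ 0) : M.det ≠ 0 := by
  let P : Matrix ι ι (regularAt c) := fun i j => ⟨M i j, hM i j⟩
  have hP : evalRegularAt c P.det ≠ 0 := by
    rwa [RingHom.map_det]
  have hMP : M.det = (regularAt c).subtype P.det := by
    rw [RingHom.map_det]; rfl
  rw [hMP, map_ne_zero_iff _ (regularAt c).subtype_injective]
  exact fun h => hP (by rw [h, map_zero])

def transition (m : ℕ) : RatFunc K := X ^ m / (1 + X ^ m)

theorem X_mem_regularAt (c : K) : (X : RatFunc K) ∈ regularAt c := by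
  simp [mem_regularAt]

theorem eventually_transition_mul_mem_regularAt_zero (r : RatFunc K) :
    ∀ᶠ m in atTop, transition m * r ∈ regularAt (0 : K) ∧
      (transition m * r).eval (RingHom.id K) 0 = 0 := by
  obtain ⟨k, hk⟩ := exists_X_pow_mul_mem_regularAt_zero r
  filter_upwards [eventually_gt_atTop k] with m hm
  have hq : (1 + Polynomial.X ^ m : K[X]).eval 0 ≠ 0 := by
    simp [zero_pow (Nat.ne_zero_of_lt hm)]
  let s : regularAt (0 : K) := ⟨X, X_mem_regularAt 0⟩ ^ (m - k) *
    ⟨_, inv_algebraMap_mem_regularAt hq⟩ * ⟨_, hk⟩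
  have hs : (s : RatFunc K) = transition m * r := by
    simp only [s, Subring.coe_mul, Subring.coe_pow, transition, map_add, map_one, map_pow,
      algebraMap_X]
    have hXm : (X : RatFunc K) ^ m = X ^ (m - k) * X ^ k := by
      rw [← pow_add, Nat.sub_add_cancel hm.le]
    rw [div_eq_mul_inv, hXm]
    ring
  refine hs ▸ ⟨s.2, ?_⟩
  change evalRegularAt 0 s = 0
  rw [map_mul, map_mul, map_pow, evalRegularAt_apply, eval_X,
    zero_pow (Nat.sub_ne_zero_of_lt hm), zero_mul, zero_mul]

theorem eventually_one_add_transition_smul_mem_regularAt_zero {ι : Type*} [Fintype ι]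
    [DecidableEq ι] (E : Matrix ι ι (RatFunc K)) :
    ∀ᶠ m in atTop,
      (∀ i j, (1 + (transition m : RatFunc K) • E) i j ∈ regularAt (0 : K)) ∧
        (1 + (transition m : RatFunc K) • E).map (eval (RingHom.id K) 0) = 1 := by
  have h := fun i j => eventually_transition_mul_mem_regularAt_zero (E i j)
  filter_upwards [eventually_all.2 fun i => eventually_all.2 (h i)] with m hm
  have hone : ∀ i j, (1 : Matrix ι ι (RatFunc K)) i j ∈ regularAt (0 : K) := fun i j => by
    rw [Matrix.one_apply]; split_ifs <;> simp
  refine ⟨fun i j => add_mem (hone i j) (hm i j).1, ?_⟩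
  ext i j
  rw [Matrix.map_apply, Matrix.add_apply, Matrix.smul_apply, smul_eq_mul,
    eval_add _ _ (hone i j) (hm i j).1, (hm i j).2, add_zero, Matrix.one_apply, Matrix.one_apply]
  split_ifs <;> simp

theorem transcendental_X_inv : Transcendental K (X⁻¹ : RatFunc K) :=
  fun h => transcendental_X (IsAlgebraic.inv_iff.mp h)

def invX : RatFunc K →ₐ[K] RatFunc K :=
  (IntermediateField.val _).comp (algEquivOfTranscendental _ transcendental_X_inv).toAlgHom

theorem invX_apply (r : RatFunc K) : invX r = r.eval (algebraMap K (RatFunc K)) X⁻¹ := by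
  change (algEquivOfTranscendental _ transcendental_X_inv r : RatFunc K) = _
  rw [algEquivOfTranscendental_apply]
  rfl

theorem invX_X : invX (X : RatFunc K) = X⁻¹ := by
  simp [invX_apply]

theorem one_add_X_pow_ne_zero {m : ℕ} (hm : m ≠ 0) : (1 + X ^ m : RatFunc K) ≠ 0 := by
  rw [← algebraMap_X, ← map_pow, ← map_one (algebraMap K[X] _), ← map_add]
  exact algebraMap_ne_zero fun h => by simpa [hm] using congrArg (Polynomial.eval 0) h

theorem invX_transition {m : ℕ} (hm : m ≠ 0) :
    invX (transition m : RatFunc K) = 1 - transition m := by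
  have hXm : (X : RatFunc K) ^ m ≠ 0 := pow_ne_zero m X_ne_zero
  have h := one_add_X_pow_ne_zero (K := K) hm
  simp only [transition, map_div₀, map_add, map_one, map_pow, invX_X, inv_pow]
  rw [← one_div, one_add_div hXm, add_comm]
  field_simp
  ring

end RatFunc

end

open RatFunc

theorem regularAtPt_iff {n : ℕ} {C : Matrix (Fin n) (Fin n) (RatFunc ℂ)} {c : ℂ} :
    RegularAtPt C c ↔
      (∀ i j, C i j ∈ regularAt c) ∧ IsUnit (C.map (RatFunc.eval (RingHom.id ℂ) c)).det :=
  Iff.rfl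

theorem regularAtInfty_iff {n : ℕ} {C : Matrix (Fin n) (Fin n) (RatFunc ℂ)} :
    RegularAtInfty C ↔ RegularAtPt (invX.mapMatrix C) 0 := by
  rw [RegularAtInfty]
  congr!
  ext i j
  exact (invX_apply _).symm

/-- Let `C⁽⁰⁾, C⁽^∞⁾ ∈ GLₙ(ℂ(z))`. There is `U ∈ GLₙ(ℂ(z))` such
that `U·C⁽⁰⁾` is regular at `0` and `U·C⁽^∞⁾` is regular at `∞`. -/
theorem simultaneous_regularization_at_zero_and_infinity
    (n : ℕ)
    (C0 : Matrix (Fin n) (Fin n) (RatFunc ℂ)) (hC0 : C0.det ≠ 0)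
    (Cinf : Matrix (Fin n) (Fin n) (RatFunc ℂ)) (hCinf : Cinf.det ≠ 0) :
    ∃ U : Matrix (Fin n) (Fin n) (RatFunc ℂ),
      U.det ≠ 0 ∧ RegularAtPt (U * C0) 0 ∧ RegularAtInfty (U * Cinf) := by
  set N := C0⁻¹ * Cinf
  have hN : IsUnit N.det := by simp [N, hC0, hCinf]
  obtain ⟨m, ⟨hA, hA1⟩, ⟨hB, hB1⟩, hm⟩ :=
    ((eventually_one_add_transition_smul_mem_regularAt_zero (N⁻¹ - 1)).and
      ((eventually_one_add_transition_smul_mem_regularAt_zero (invX.mapMatrix (N - 1))).and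
        (eventually_ne_atTop 0))).exists
  set A := 1 + (transition m : RatFunc ℂ) • (N⁻¹ - 1)
  have hAN :
      invX.mapMatrix (A * N) = 1 + (transition m : RatFunc ℂ) • invX.mapMatrix (N - 1) := by
    have hAN' : A * N = 1 + (1 - transition m : RatFunc ℂ) • (N - 1) := by
      simp only [A, Matrix.add_mul, Matrix.smul_mul, Matrix.sub_mul, Matrix.nonsing_inv_mul _ hN,
        Matrix.one_mul, sub_smul, one_smul, smul_sub]
      abel
    rw [hAN', map_add, map_one]
    ext i j
    simp [invX_transition hm]
  refine ⟨A * C0⁻¹, ?_, ?_, ?_⟩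
  · rw [Matrix.det_mul]
    exact mul_ne_zero (det_ne_zero_of_forall_mem_regularAt hA (by rw [hA1]; simp))
      (by simp [hC0])
  · rw [Matrix.mul_assoc, Matrix.nonsing_inv_mul _ hC0.isUnit, Matrix.mul_one]
    exact regularAtPt_iff.2 ⟨hA, by rw [hA1]; simp⟩
  · rw [regularAtInfty_iff, Matrix.mul_assoc, hAN]
    exact regularAtPt_iff.2 ⟨hB, by rw [hB1]; simp⟩
end

section
/- Let g be a function meromorphic on the open unit disk D(0,1) and let h be a function meromorphic on all of ℂ such that h(u) = g(exp(u)) for every u with Re(u) < 0 at which both sides are defined. Then there exists a function G meromorphic on all of ℂ that agrees with g on the punctured disk D(0,1) ∖ {0}; in particular h(u) = G(exp(u)) for all u ∈ ℂ at which both sides are defined. -/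
open Metric

/-!
On the left half-plane `h` agrees with `g ∘ exp`, which is `2πi`-periodic; by the identity
theorem for meromorphic functions on `ℂ`, the germs of `h` are then `2πi`-periodic at every
point. The values of `h` at its singularities are arbitrary, so we pass to the normal form `H`
of `h`, which is determined by its germs and hence genuinely periodic. Then `G := H ∘ log`
satisfies `G ∘ exp = H`; as `exp` is a local biholomorphism, `G` is meromorphic on `ℂ ∖ {0}`,
and on the punctured disk it equals the normal form of `g`, which is meromorphic at `0`.
-/

open Complex Filter Function Set Topology

section NormalForm

variable {𝕜 : Type*} [NontriviallyNormedField 𝕜] {E : Type*} [NormedAddCommGroup E]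
  [NormedSpace 𝕜 E] {f g : 𝕜 → E} {x : 𝕜}

theorem MeromorphicNFAt.eq_of_eventuallyEq_nhdsNE (hf : MeromorphicNFAt f x)
    (hg : MeromorphicNFAt g x) (hfg : f =ᶠ[𝓝[≠] x] g) : f x = g x :=
  ((hf.eventuallyEq_nhdsNE_iff_eventuallyEq_nhds hg).1 hfg).eq_of_nhds

theorem AnalyticAt.toMeromorphicNFOn_eq {U : Set 𝕜} (hf : AnalyticAt 𝕜 f x)
    (hU : MeromorphicOn f U) (hx : x ∈ U) : toMeromorphicNFOn f U x = f x :=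
  (meromorphicNFOn_toMeromorphicNFOn f U hx).eq_of_eventuallyEq_nhdsNE hf.meromorphicNFAt
    (hU.toMeromorphicNFOn_eq_self_on_nhdsNE hx)

theorem toMeromorphicNFOn_eq_comp_of_eventuallyEq {U V : Set 𝕜} {φ : 𝕜 → 𝕜}
    (hf : MeromorphicOn f U) (hg : MeromorphicOn g V) (hx : x ∈ U) (hφx : φ x ∈ V)
    (hφ : AnalyticAt 𝕜 φ x) (hφ_tendsto : Tendsto φ (𝓝[≠] x) (𝓝[≠] (φ x)))
    (hfg : f =ᶠ[𝓝[≠] x] g ∘ φ) :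
    toMeromorphicNFOn f U x = toMeromorphicNFOn g V (φ x) :=
  (meromorphicNFOn_toMeromorphicNFOn f U hx).eq_of_eventuallyEq_nhdsNE
    ((meromorphicNFOn_toMeromorphicNFOn g V hφx).comp_analyticAt hφ)
    ((hf.toMeromorphicNFOn_eq_self_on_nhdsNE hx).trans <| hfg.trans
      ((hg.toMeromorphicNFOn_eq_self_on_nhdsNE hφx).comp_tendsto hφ_tendsto).symm)

end NormalForm

section IdentityTheorem

variable {𝕜 : Type*} [RCLike 𝕜] {E : Type*} [NormedAddCommGroup E] [NormedSpace 𝕜 E]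
  {f g : 𝕜 → E} {x : 𝕜}

theorem Meromorphic.eventuallyEq_nhdsNE_of_eventuallyEq_nhdsNE (hf : Meromorphic f)
    (hg : Meromorphic g) (hfg : f =ᶠ[𝓝[≠] x] g) (y : 𝕜) : f =ᶠ[𝓝[≠] y] g := by
  by_contra hy
  have hy' : meromorphicOrderAt (f - g) y ≠ ⊤ := by
    rw [Ne, meromorphicOrderAt_eq_top_iff]
    exact fun hfg_y ↦ hy (eventuallyEq_iff_sub.2 hfg_y)
  exact (hf.sub hg).exists_meromorphicOrderAt_ne_top_iff_forall.1 ⟨y, hy'⟩ x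
    (meromorphicOrderAt_eq_top_iff.2 (eventuallyEq_iff_sub.1 hfg))

theorem MeromorphicNFOn.periodic_of_eventuallyEq_nhdsNE {c : 𝕜} (hf : MeromorphicNFOn f univ)
    (hfc : (fun z ↦ f (z + c)) =ᶠ[𝓝[≠] x] f) : Periodic f c := fun y ↦ by
  have hfc_nf : MeromorphicNFOn (fun z ↦ f (z + c)) univ := fun z _ ↦
    meromorphicNFAt_fun_comp_add_const_iff_meromorphicNFAt.2 (hf (mem_univ _))
  exact (hfc_nf (mem_univ y)).eq_of_eventuallyEq_nhdsNE (hf (mem_univ y))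
    ((meromorphicOn_univ.1 hfc_nf.meromorphicOn).eventuallyEq_nhdsNE_of_eventuallyEq_nhdsNE
      (meromorphicOn_univ.1 hf.meromorphicOn) hfc y)

end IdentityTheorem

theorem Function.Periodic.comp_log_exp {α : Type*} {H : ℂ → α}
    (hH : Periodic H (2 * Real.pi * I)) (u : ℂ) : H (log (exp u)) = H u := by
  obtain ⟨n, hn⟩ := exp_eq_exp_iff_exists_int.1 (exp_log (exp_ne_zero u))
  rw [hn, hH.int_mul n u]

theorem Function.Periodic.meromorphicAt_comp_log {E : Type*} [NormedAddCommGroup E]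
    [NormedSpace ℂ E] {H : ℂ → E} (hH : Meromorphic H) (hper : Periodic H (2 * Real.pi * I))
    {z : ℂ} (hz : z ≠ 0) : MeromorphicAt (H ∘ log) z := by
  have hexp : (H ∘ log) ∘ exp = H := funext hper.comp_log_exp
  rw [← exp_log hz, ← meromorphicAt_comp_iff_of_deriv_ne_zero analyticAt_cexp (by simp), hexp]
  exact hH _

theorem Complex.tendsto_exp_nhdsNE (p : ℂ) : Tendsto exp (𝓝[≠] p) (𝓝[≠] (exp p)) :=
  (hasDerivAt_exp p).tendsto_nhdsNE (exp_ne_zero p)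

theorem Complex.exp_mem_ball_of_re_neg {p : ℂ} (hp : p.re < 0) : exp p ∈ ball (0 : ℂ) 1 := by
  rw [mem_ball_zero_iff, norm_exp]
  exact Real.exp_lt_one_iff.2 hp

theorem Complex.eventually_re_neg {p : ℂ} (hp : p.re < 0) : ∀ᶠ u in 𝓝 p, u.re < 0 :=
  continuous_re.continuousAt.eventually_lt continuousAt_const hp

theorem Complex.re_log_neg_of_mem_ball {z : ℂ} (hz : z ∈ ball (0 : ℂ) 1) (hz0 : z ≠ 0) :
    (log z).re < 0 := by
  rw [log_re]
  exact Real.log_neg (norm_pos_iff.2 hz0) (by simpa using hz)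

theorem eventuallyEq_nhdsNE_comp_exp_of_re_neg {E : Type*} [NormedAddCommGroup E]
    [NormedSpace ℂ E] [CompleteSpace E] {g h : ℂ → E} {p : ℂ}
    (hg : MeromorphicOn g (ball (0 : ℂ) 1)) (hh : MeromorphicAt h p)
    (hgh : ∀ u : ℂ, u.re < 0 → AnalyticAt ℂ h u → AnalyticAt ℂ g (exp u) → h u = g (exp u))
    (hp : p.re < 0) : h =ᶠ[𝓝[≠] p] g ∘ exp := by
  filter_upwards [hh.eventually_analyticAt,
    tendsto_exp_nhdsNE p (hg _ (exp_mem_ball_of_re_neg hp)).eventually_analyticAt,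
    eventually_nhdsWithin_of_eventually_nhds (eventually_re_neg hp)] with u hhu hgu hu
  exact hgh u hu hhu hgu

theorem MeromorphicNFOn.periodic_of_eq_comp_exp {E : Type*} [NormedAddCommGroup E]
    [NormedSpace ℂ E] {H F : ℂ → E} (hH : MeromorphicNFOn H univ)
    (hHF : ∀ p : ℂ, p.re < 0 → H p = F (exp p)) : Periodic H (2 * Real.pi * I) := by
  refine hH.periodic_of_eventuallyEq_nhdsNE (x := -1) ?_
  filter_upwards [eventually_nhdsWithin_of_eventually_nhds (eventually_re_neg (by simp))]
    with z hz
  rw [hHF z hz, hHF _ (by simpa using hz), exp_add, exp_two_pi_mul_I, mul_one]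

/-- Let `g` be meromorphic on the open unit disk and `h` be
meromorphic on all of `ℂ`, with `h(u) = g(exp u)` for every `u` with `Re u < 0` at
which both sides are defined. Then there is a function `G` meromorphic on all of `ℂ`
agreeing with `g` on the punctured unit disk; in particular `h(u) = G(exp u)` for
all `u ∈ ℂ` at which both sides are defined. -/
theorem meromorphic_pullback_disk_extends
    (g h : ℂ → ℂ)
    (hg : MeromorphicOn g (ball (0 : ℂ) 1))
    (hh : ∀ u : ℂ, MeromorphicAt h u)
    (hgh : ∀ u : ℂ, u.re < 0 → AnalyticAt ℂ h u →
      AnalyticAt ℂ g (Complex.exp u) → h u = g (Complex.exp u)) :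
    ∃ G : ℂ → ℂ,
      (∀ z : ℂ, MeromorphicAt G z) ∧
      (∀ z ∈ ball (0 : ℂ) 1, z ≠ 0 → AnalyticAt ℂ g z → AnalyticAt ℂ G z →
        G z = g z) ∧
      (∀ u : ℂ, AnalyticAt ℂ h u → AnalyticAt ℂ G (Complex.exp u) →
        h u = G (Complex.exp u)) := by
  set H := toMeromorphicNFOn h univ
  set ĝ := toMeromorphicNFOn g (ball 0 1)
  have hH : MeromorphicNFOn H univ := meromorphicNFOn_toMeromorphicNFOn h univ
  have hH_exp : ∀ p : ℂ, p.re < 0 → H p = ĝ (exp p) := fun p hp ↦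
    toMeromorphicNFOn_eq_comp_of_eventuallyEq (meromorphicOn_univ.2 hh) hg (mem_univ p)
      (exp_mem_ball_of_re_neg hp) analyticAt_cexp (tendsto_exp_nhdsNE p)
      (eventuallyEq_nhdsNE_comp_exp_of_re_neg hg (hh p) hgh hp)
  have hper : Periodic H (2 * Real.pi * I) := hH.periodic_of_eq_comp_exp hH_exp
  have hH_log : ∀ z ∈ ball (0 : ℂ) 1, z ≠ 0 → H (log z) = ĝ z := fun z hz hz0 ↦ by
    rw [hH_exp _ (re_log_neg_of_mem_ball hz hz0), exp_log hz0]
  refine ⟨H ∘ log, fun z ↦ ?_, fun z hz hz0 hgz _ ↦ ?_, fun u hu _ ↦ ?_⟩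
  · rcases eq_or_ne z 0 with rfl | hz
    · have hĝ : MeromorphicAt ĝ 0 :=
        (meromorphicNFOn_toMeromorphicNFOn g _ (mem_ball_self one_pos)).meromorphicAt
      refine hĝ.congr ?_
      filter_upwards [eventually_nhdsWithin_of_eventually_nhds (ball_mem_nhds (0 : ℂ) one_pos),
        self_mem_nhdsWithin] with w hw (hw0 : w ≠ 0)
      exact (hH_log w hw hw0).symm
    · exact hper.meromorphicAt_comp_log (meromorphicOn_univ.1 hH.meromorphicOn) hz
  · rw [comp_apply, hH_log z hz hz0]
    exact hgz.toMeromorphicNFOn_eq hg hz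
  · rw [comp_apply, hper.comp_log_exp]
    exact (hu.toMeromorphicNFOn_eq (meromorphicOn_univ.2 hh) (mem_univ u)).symm
end

section
/- Let p ≥ 2 be an integer, A₁ ∈ GL_{n₁}(ℂ) and B₁ ∈ GL_{n₂}(ℂ). Let S be an n₂×n₁ matrix whose entries are Laurent polynomials over ℂ, such that S(p·t)·A₁ = B₁·S(t) for every t ∈ ℂ∖{0}. If S(c) = 0 for some c ∈ ℂ∖{0}, then S = 0 (every entry of S is the zero Laurent polynomial). -/
/-- Evaluation at `t ∈ ℂ∖{0}` of a Laurent polynomial given by its (finitely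
supported) coefficient family `c : ℤ →₀ ℂ`. -/
noncomputable def laurentEval (c : ℤ →₀ ℂ) (t : ℂ) : ℂ :=
  c.sum fun k a => a * t ^ k

/-- Let `p ≥ 2`, `A₁ ∈ GL_{n₁}(ℂ)`, `B₁ ∈ GL_{n₂}(ℂ)` and let `S`
be an `n₂×n₁` matrix of Laurent polynomials (encoded by their coefficient families)
with `S(p·t)·A₁ = B₁·S(t)` for every `t ≠ 0`. If `S(c) = 0` for some `c ≠ 0`, then
`S = 0` (every entry is the zero Laurent polynomial). -/
theorem laurent_polynomial_solution_vanishing_at_a_point_is_zero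
    (p : ℕ) (hp : 2 ≤ p) (n₁ n₂ : ℕ)
    (A₁ : Matrix (Fin n₁) (Fin n₁) ℂ) (hA₁ : IsUnit A₁.det)
    (B₁ : Matrix (Fin n₂) (Fin n₂) ℂ) (hB₁ : IsUnit B₁.det)
    (S : Matrix (Fin n₂) (Fin n₁) (ℤ →₀ ℂ))
    (heq : ∀ t : ℂ, t ≠ 0 →
      (Matrix.of fun i j => laurentEval (S i j) ((p : ℂ) * t)) * A₁
        = B₁ * (Matrix.of fun i j => laurentEval (S i j) t))
    (c : ℂ) (hc : c ≠ 0)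
    (hvanish : (Matrix.of fun i j => laurentEval (S i j) c) = 0) :
    S = 0 := by
  have hp0 : (p : ℂ) ≠ 0 := by
    have : 0 < p := lt_of_lt_of_le (by norm_num) hp
    exact_mod_cast this.ne'
  have hAinv : A₁ * A₁⁻¹ = 1 := Matrix.mul_nonsing_inv A₁ hA₁
  -- Step 1: S vanishes at p^m * c for all m
  have hvan : ∀ m : ℕ,
      (Matrix.of fun i j => laurentEval (S i j) ((p : ℂ) ^ m * c)) = 0 := by
    intro m
    induction m with
    | zero => simpa using hvanish
    | succ m ih =>
      have hpt : ((p : ℂ) ^ m * c) ≠ 0 := mul_ne_zero (pow_ne_zero _ hp0) hc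
      have h := heq _ hpt
      rw [ih, Matrix.mul_zero] at h
      have harg : (p : ℂ) ^ (m + 1) * c = (p : ℂ) * ((p : ℂ) ^ m * c) := by ring
      rw [harg]
      calc (Matrix.of fun i j => laurentEval (S i j) ((p : ℂ) * ((p : ℂ) ^ m * c)))
          = (Matrix.of fun i j => laurentEval (S i j) ((p : ℂ) * ((p : ℂ) ^ m * c)))
            * A₁ * A₁⁻¹ := by rw [Matrix.mul_assoc, hAinv, Matrix.mul_one]
        _ = 0 := by rw [h, Matrix.zero_mul]
  -- the points p^m * c are pairwise distinct
  have hinj : Function.Injective (fun m : ℕ => (p : ℂ) ^ m * c) := by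
    intro a b hab
    simp only [mul_left_inj' hc] at hab
    have : ((p ^ a : ℕ) : ℂ) = ((p ^ b : ℕ) : ℂ) := by push_cast; exact hab
    exact Nat.pow_right_injective hp (Nat.cast_injective this)
  -- Step 2: entrywise conclusion
  ext i j k
  by_cases hk : k ∈ (S i j).support
  · set f := S i j with hf
    set N : ℕ := f.support.sup fun k => k.natAbs with hN
    have hNk : ∀ l ∈ f.support, (0 : ℤ) ≤ l + N := by
      intro l hl
      have h1 : l.natAbs ≤ N := Finset.le_sup (f := fun k => k.natAbs) hl
      have h2 : -(N : ℤ) ≤ l := by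
        have := neg_abs_le l
        have habs : (l.natAbs : ℤ) = |l| := Int.natCast_natAbs l
        omega
      omega
    set Q : Polynomial ℂ :=
      ∑ l ∈ f.support, Polynomial.C (f l) * Polynomial.X ^ (l + N).toNat with hQ
    have hQeval : ∀ t : ℂ, t ≠ 0 → Q.eval t = t ^ (N : ℤ) * laurentEval f t := by
      intro t ht
      rw [hQ]
      simp only [Polynomial.eval_finset_sum, Polynomial.eval_mul, Polynomial.eval_C,
        Polynomial.eval_pow, Polynomial.eval_X]
      rw [laurentEval, Finsupp.sum, Finset.mul_sum]
      apply Finset.sum_congr rfl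
      intro l hl
      have : (t : ℂ) ^ (l + N).toNat = t ^ ((l : ℤ) + N) := by
        rw [← zpow_natCast, Int.toNat_of_nonneg (hNk l hl)]
      rw [this, zpow_add₀ ht]
      ring
    have hQ0 : Q = 0 := by
      apply Polynomial.eq_zero_of_infinite_isRoot
      apply Set.infinite_of_injective_forall_mem hinj
      intro m
      have hpt : ((p : ℂ) ^ m * c) ≠ 0 := mul_ne_zero (pow_ne_zero _ hp0) hc
      have hEntry : laurentEval f ((p : ℂ) ^ m * c) = 0 := by
        have := congrFun (congrFun (hvan m) i) j
        simpa [hf] using this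
      simp only [Set.mem_setOf_eq, Polynomial.IsRoot.def]
      rw [hQeval _ hpt, hEntry, mul_zero]
    -- extract the coefficient
    have hcoeff : Q.coeff ((k + N).toNat) = f k := by
      rw [hQ, Polynomial.finset_sum_coeff]
      simp only [Polynomial.coeff_C_mul, Polynomial.coeff_X_pow]
      rw [Finset.sum_eq_single k]
      · simp
      · intro l hl hlk
        have : (l + (N : ℤ)).toNat ≠ (k + (N : ℤ)).toNat := by
          intro hEq
          apply hlk
          have h1 := Int.toNat_of_nonneg (hNk l hl)
          have h2 := Int.toNat_of_nonneg (hNk k hk)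
          omega
        rw [if_neg (fun h => this h.symm), mul_zero]
      · intro h
        exact absurd hk h
    have : f k = 0 := by rw [← hcoeff, hQ0, Polynomial.coeff_zero]
    simpa using this
  · simpa using Finsupp.notMem_support_iff.mp hk
end

section
/- Let M be an n×n matrix of germs of functions meromorphic at 0 ∈ ℂ with determinant not identically zero. Then M can be written M = C·R (as germs of meromorphic matrices at 0), where C is an n×n matrix of rational functions over ℂ with det C ≠ 0, and R is an n×n matrix of functions holomorphic at 0 with R(0) invertible. -/
open Filter Topology

/-!
Clearing denominators, `G := z ^ k • M` is holomorphic at `0`; let `m` be the vanishing order of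
`det G`. Truncating Taylor expansions gives `G = P + z ^ (m + 1) • H` with `P` a polynomial matrix
and `H` holomorphic. The determinant is a polynomial in the entries, so
`det P ≡ det G mod z ^ (m + 1)`, whence `det P = z ^ m * Q` with `Q(0) ≠ 0`. Since
`P * adj P = z ^ m * Q`, the matrix `R := 1 + (z / Q) • adj P * H` is holomorphic at `0` with
`R(0) = 1` and satisfies `P * R = P + z ^ (m + 1) • H = G`. Finally `C := z ^ (-k) • P`.
-/

open Polynomial

universe u

theorem RatFunc.eval_algebraMap_div {K L : Type u} [Field K] [Field L] (f : K →+* L) {a : L}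
    (p : K[X]) {q : K[X]} (hq : q.eval₂ f a ≠ 0) :
    (algebraMap K[X] (RatFunc K) p / algebraMap _ _ q).eval f a = p.eval₂ f a / q.eval₂ f a := by
  have hq0 : q ≠ 0 := by rintro rfl; simp at hq
  have hdenom : (algebraMap K[X] (RatFunc K) p / algebraMap _ _ q).denom.eval₂ f a ≠ 0 := by
    obtain ⟨r, hr⟩ := RatFunc.denom_div_dvd p q
    intro h
    rw [hr, eval₂_mul, h, zero_mul] at hq
    exact hq rfl
  have hmul := RatFunc.eval_mul f a hdenom (y := algebraMap _ _ q) (by simp)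
  rw [div_mul_cancel₀ _ (RatFunc.algebraMap_ne_zero hq0), RatFunc.eval_algebraMap,
    RatFunc.eval_algebraMap] at hmul
  rw [eq_div_iff hq]
  exact hmul.symm

namespace Matrix

variable {ι : Type*} [Fintype ι] [DecidableEq ι]

theorem dvd_det_add_smul_sub_det {S : Type*} [CommRing S] (c : S) (A H : Matrix ι ι S) :
    c ∣ (A + c • H).det - A.det := by
  let π := Ideal.Quotient.mk (Ideal.span {c})
  have hmap : (A + c • H).map π = A.map π := by
    ext i j
    simp [π, Ideal.Quotient.eq_zero_iff_mem.mpr (Ideal.mem_span_singleton_self c)]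
  rw [← Ideal.mem_span_singleton, ← Ideal.Quotient.eq]
  change π _ = π _
  rw [π.map_det, π.map_det, RingHom.mapMatrix_apply, RingHom.mapMatrix_apply, hmap]

theorem mul_one_add_smul_adjugate_mul {S : Type*} [CommRing S] {P : Matrix ι ι S} {t : S}
    {u : Sˣ} {m : ℕ} (hP : P.det = t ^ m * u) (H : Matrix ι ι S) :
    P * (1 + (t * ↑u⁻¹) • (P.adjugate * H)) = P + t ^ (m + 1) • H := by
  rw [mul_add, mul_one, Matrix.mul_smul, ← Matrix.mul_assoc, mul_adjugate, hP, smul_mul, one_mul,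
    smul_smul]
  congr 2
  rw [pow_succ, mul_mul_mul_comm, Units.inv_mul, mul_one, mul_comm]

section SubringClass

variable {A : Type*} [CommRing A] {σ : Type*} [SetLike σ A] [SubringClass σ A] (s : σ)

theorem exists_mem_det_add_smul_eq {M H : Matrix ι ι A} {c : A} (hM : ∀ i j, M i j ∈ s)
    (hH : ∀ i j, H i j ∈ s) (hc : c ∈ s) :
    ∃ w ∈ s, (M + c • H).det = M.det + c * w := by
  obtain ⟨w, hw⟩ := dvd_det_add_smul_sub_det (⟨c, hc⟩ : s)
    (of fun i j => ⟨M i j, hM i j⟩) (of fun i j => ⟨H i j, hH i j⟩)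
  refine ⟨w, w.2, ?_⟩
  have := congrArg (SubringClass.subtype s) hw
  rw [map_sub, RingHom.map_det, RingHom.map_det, map_mul] at this
  rw [← sub_eq_iff_eq_add']
  exact this

end SubringClass

theorem det_of_apply {α R : Type*} [CommRing R] (A : Matrix ι ι (α → R)) (x : α) :
    (of fun i j => A i j x).det = A.det x :=
  (RingHom.map_det (Pi.evalRingHom (fun _ => R) x) A).symm

theorem exists_ratFunc_eval_eq_inv_pow_smul {K : Type*} [Field K] {P : Matrix ι ι K[X]}
    (hP : P.det ≠ 0) (k : ℕ) :
    ∃ C : Matrix ι ι (RatFunc K), C.det ≠ 0 ∧ ∀ z ≠ 0,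
      (of fun i j => (C i j).eval (RingHom.id K) z) = (z ^ k)⁻¹ • P.map (eval z) := by
  refine ⟨of fun i j => algebraMap K[X] (RatFunc K) (P i j) / algebraMap _ _ (X ^ k : K[X]),
    ?_, fun z hz => ?_⟩
  · have hC : (of fun i j => algebraMap K[X] (RatFunc K) (P i j) / algebraMap _ _ (X ^ k : K[X]))
        = (algebraMap K[X] (RatFunc K) (X ^ k))⁻¹ • P.map (algebraMap K[X] (RatFunc K)) := by
      ext i j
      simp [div_eq_inv_mul]
    rw [hC, det_smul, ← RingHom.mapMatrix_apply, ← RingHom.map_det]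
    simp [hP, RatFunc.X_ne_zero]
  · ext i j
    simp only [of_apply, smul_apply, map_apply]
    rw [RatFunc.eval_algebraMap_div _ _ (q := X ^ k) (by simp [hz])]
    simp [div_eq_inv_mul]

end Matrix

section Analytic

variable {𝕜 : Type*} [NontriviallyNormedField 𝕜]

variable (𝕜) in
def analyticAtSubalgebra (x : 𝕜) : Subalgebra 𝕜 (𝕜 → 𝕜) where
  carrier := {f | AnalyticAt 𝕜 f x}
  mul_mem' := AnalyticAt.mul
  add_mem' := AnalyticAt.add
  algebraMap_mem' _ := analyticAt_const

namespace Polynomial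

@[fun_prop]
theorem analyticAt_eval (p : 𝕜[X]) (x : 𝕜) : AnalyticAt 𝕜 (fun z => p.eval z) x := by
  simpa using analyticAt_id.aeval_polynomial (𝕜 := 𝕜) (z := x) p

theorem analyticOrderAt_eval {p : 𝕜[X]} (hp : p ≠ 0) (x : 𝕜) :
    analyticOrderAt (fun z => p.eval z) x = p.rootMultiplicity x := by
  rw [(analyticAt_eval p x).analyticOrderAt_eq_natCast]
  refine ⟨_, analyticAt_eval _ x, eval_divByMonic_pow_rootMultiplicity_ne_zero x hp,
    Eventually.of_forall fun z => ?_⟩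
  conv_lhs => rw [← pow_mul_divByMonic_rootMultiplicity_eq p x]
  simp

end Polynomial

theorem MeromorphicAt.exists_analyticAt_pow_smul {ι E : Type*} [Finite ι] [NormedAddCommGroup E]
    [NormedSpace 𝕜 E] {f : ι → 𝕜 → E} {x : 𝕜} (hf : ∀ i, MeromorphicAt (f i) x) :
    ∃ n : ℕ, ∀ i, AnalyticAt 𝕜 (fun z => (z - x) ^ n • f i z) x := by
  choose k hk using hf
  obtain ⟨n, hn⟩ := (Set.finite_range k).bddAbove
  refine ⟨n, fun i => ?_⟩
  have hki : k i ≤ n := hn ⟨i, rfl⟩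
  have hsplit : (fun z => (z - x) ^ n • f i z) =
      fun z => (z - x) ^ (n - k i) • (z - x) ^ k i • f i z := by
    funext z
    rw [smul_smul, ← pow_add, Nat.sub_add_cancel hki]
  rw [hsplit]
  exact ((analyticAt_id.sub analyticAt_const).pow _).smul (hk i)

variable {ι : Type*} [Fintype ι] [DecidableEq ι]

theorem exists_analyticAt_mul_eq_add_pow_smul {P : Matrix ι ι 𝕜[X]} {Q : 𝕜[X]} {m : ℕ}
    (hQ : Q.eval 0 ≠ 0) (hP : P.det = X ^ m * Q) {H : Matrix ι ι (𝕜 → 𝕜)}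
    (hH : ∀ i j, AnalyticAt 𝕜 (H i j) 0) :
    ∃ R : Matrix ι ι (𝕜 → 𝕜), (∀ i j, AnalyticAt 𝕜 (R i j) 0) ∧
      (Matrix.of fun i j => R i j 0) = 1 ∧
      ∀ᶠ z in 𝓝 0, P.map (eval z) * (Matrix.of fun i j => R i j z) =
        P.map (eval z) + z ^ (m + 1) • Matrix.of fun i j => H i j z := by
  have hadj : ∀ z, (P.map (eval z)).adjugate = P.adjugate.map (eval z) := fun z =>
    ((evalRingHom z).map_adjugate P).symm
  refine ⟨Matrix.of fun i j z => (1 + (z * (Q.eval z)⁻¹) •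
    ((P.map (eval z)).adjugate * Matrix.of fun i j => H i j z)) i j, fun i j => ?_, ?_, ?_⟩
  · simp only [Matrix.of_apply, hadj, Matrix.add_apply, Matrix.smul_apply, Matrix.mul_apply,
      Matrix.map_apply, smul_eq_mul]
    fun_prop (disch := exact hQ)
  · ext i j
    simp
  · filter_upwards [(Q.continuous.continuousAt (x := 0)).eventually_ne hQ] with z hz
    have hPz : (P.map (eval z)).det = z ^ m * (Units.mk0 _ hz : 𝕜) := by
      rw [Units.val_mk0, ← coe_evalRingHom, ← RingHom.mapMatrix_apply, ← RingHom.map_det, hP]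
      simp
    exact Matrix.mul_one_add_smul_adjugate_mul hPz _

variable [CharZero 𝕜] [CompleteSpace 𝕜]

theorem AnalyticAt.exists_polynomial_add_pow_mul {f : 𝕜 → 𝕜}
    (hf : AnalyticAt 𝕜 f 0) (n : ℕ) :
    ∃ p : 𝕜[X], ∃ F : 𝕜 → 𝕜, AnalyticAt 𝕜 F 0 ∧ ∀ z, f z = p.eval z + z ^ n * F z := by
  obtain ⟨F, hF, hfF⟩ := hf.exists_eq_sum_add_pow_mul n
  refine ⟨∑ i ∈ Finset.range n, C (iteratedDeriv i f 0 / i.factorial) * X ^ i, F, hF,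
    fun z => ?_⟩
  simp only [hfF z, eval_finsetSum, eval_mul, eval_C, eval_pow, eval_X, smul_eq_mul]
  congr 1
  exact Finset.sum_congr rfl fun i _ => by ring

theorem exists_polynomial_matrix_det_eq_X_pow_mul {G : Matrix ι ι (𝕜 → 𝕜)}
    (hG : ∀ i j, AnalyticAt 𝕜 (G i j) 0) {m : ℕ} (hm : analyticOrderAt G.det 0 = m) :
    ∃ P : Matrix ι ι 𝕜[X], ∃ H : Matrix ι ι (𝕜 → 𝕜), (∀ i j, AnalyticAt 𝕜 (H i j) 0) ∧
      (∀ z, (Matrix.of fun i j => G i j z) =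
        P.map (eval z) + z ^ (m + 1) • Matrix.of fun i j => H i j z) ∧
      ∃ Q : 𝕜[X], Q.eval 0 ≠ 0 ∧ P.det = X ^ m * Q := by
  choose P H hH hGPH using fun i j => (hG i j).exists_polynomial_add_pow_mul (m + 1)
  let φ : 𝕜[X] →+* (𝕜 → 𝕜) := RingHom.pi evalRingHom
  have hG_eq : G = (Matrix.of P).map φ + (fun z : 𝕜 => z ^ (m + 1)) • Matrix.of H := by
    ext i j z
    simp [φ, hGPH]
  obtain ⟨w, hw, hdet⟩ := Matrix.exists_mem_det_add_smul_eq (analyticAtSubalgebra 𝕜 0)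
    (M := (Matrix.of P).map φ) (H := Matrix.of H) (c := fun z : 𝕜 => z ^ (m + 1))
    (fun i j => Polynomial.analyticAt_eval (P i j) 0) hH
    (show AnalyticAt 𝕜 (fun z : 𝕜 => z ^ (m + 1)) 0 by fun_prop)
  rw [← hG_eq, ← RingHom.mapMatrix_apply, ← RingHom.map_det] at hdet
  have hw : AnalyticAt 𝕜 w 0 := hw
  have hw_order : (m : ℕ∞) < analyticOrderAt (-((fun z : 𝕜 => z ^ (m + 1)) * w)) 0 := by
    rw [analyticOrderAt_neg]
    refine (ENat.natCast_lt_natCast.mpr m.lt_succ_self).trans_le ?_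
    rw [natCast_le_analyticOrderAt (by fun_prop)]
    exact ⟨w, hw, Eventually.of_forall fun z => by simp⟩
  have hPdet_eq : (fun z => (Matrix.of P).det.eval z) =
      G.det + -((fun z : 𝕜 => z ^ (m + 1)) * w) := by
    rw [hdet]
    ext z
    simp [φ]
  have hPdet : analyticOrderAt (fun z => (Matrix.of P).det.eval z) 0 = m := by
    rw [hPdet_eq, analyticOrderAt_add_eq_left_of_lt (hm ▸ hw_order), hm]
  have hP0 : (Matrix.of P).det ≠ 0 := by
    rintro h
    rw [h, analyticOrderAt_eq_top.mpr (Eventually.of_forall fun _ => eval_zero)] at hPdet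
    exact ENat.top_ne_natCast m hPdet
  rw [analyticOrderAt_eval hP0, Nat.cast_inj] at hPdet
  refine ⟨Matrix.of P, Matrix.of H, hH, fun z => by ext i j; simp [hGPH],
    _, eval_divByMonic_pow_rootMultiplicity_ne_zero 0 hP0, ?_⟩
  conv_lhs => rw [← pow_mul_divByMonic_rootMultiplicity_eq (Matrix.of P).det 0]
  simp [hPdet]

theorem exists_polynomial_matrix_mul_of_analyticAt {G : Matrix ι ι (𝕜 → 𝕜)}
    (hG : ∀ i j, AnalyticAt 𝕜 (G i j) 0) (hdet : ∃ᶠ z in 𝓝[≠] 0, G.det z ≠ 0) :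
    ∃ P : Matrix ι ι 𝕜[X], P.det ≠ 0 ∧ ∃ R : Matrix ι ι (𝕜 → 𝕜),
      (∀ i j, AnalyticAt 𝕜 (R i j) 0) ∧ (Matrix.of fun i j => R i j 0) = 1 ∧
      ∀ᶠ z in 𝓝 0, (Matrix.of fun i j => G i j z) =
        P.map (eval z) * Matrix.of fun i j => R i j z := by
  have hG_order : analyticOrderAt G.det 0 ≠ ⊤ := fun h => hdet <|
    (eventually_nhdsWithin_of_eventually_nhds (analyticOrderAt_eq_top.mp h)).mono
      fun _ hz => not_not_intro hz
  obtain ⟨m, hm⟩ := ENat.ne_top_iff_exists.mp hG_order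
  obtain ⟨P, H, hH, hGPH, Q, hQ, hP⟩ := exists_polynomial_matrix_det_eq_X_pow_mul hG hm.symm
  obtain ⟨R, hR, hR0, hPR⟩ := exists_analyticAt_mul_eq_add_pow_smul hQ hP hH
  have hQ0 : Q ≠ 0 := by rintro rfl; exact hQ eval_zero
  refine ⟨P, hP ▸ mul_ne_zero (pow_ne_zero _ X_ne_zero) hQ0, R, hR, hR0, ?_⟩
  filter_upwards [hPR] with z hz
  rw [hz, hGPH]

end Analytic

/-- Let `M` be an `n×n` matrix of germs of meromorphic functions at
`0` with determinant not identically zero. Then `M = C·R` as germs at `0`, where `C`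
is a matrix of rational functions with `det C ≠ 0`, and `R` is a matrix of functions
holomorphic at `0` with `R(0)` invertible. -/
theorem meromorphic_matrix_factorization_at_zero
    (n : ℕ) (M : Matrix (Fin n) (Fin n) (ℂ → ℂ))
    (hM : ∀ i j, MeromorphicAt (M i j) 0)
    (hdet : ∃ᶠ z in 𝓝[≠] (0 : ℂ), (Matrix.of fun i j => M i j z).det ≠ 0) :
    ∃ C : Matrix (Fin n) (Fin n) (RatFunc ℂ),
      C.det ≠ 0 ∧
      ∃ R : Matrix (Fin n) (Fin n) (ℂ → ℂ),
        (∀ i j, AnalyticAt ℂ (R i j) 0) ∧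
        IsUnit (Matrix.of fun i j => R i j 0).det ∧
        ∀ᶠ z in 𝓝[≠] (0 : ℂ),
          (Matrix.of fun i j => M i j z)
            = (Matrix.of fun i j => ratEval (C i j) z) *
              (Matrix.of fun i j => R i j z) := by
  obtain ⟨k, hk⟩ := MeromorphicAt.exists_analyticAt_pow_smul (ι := Fin n × Fin n)
    fun ij => hM ij.1 ij.2
  let G : Matrix (Fin n) (Fin n) (ℂ → ℂ) := Matrix.of fun i j z => z ^ k * M i j z
  have hGM : ∀ z, (Matrix.of fun i j => G i j z) = z ^ k • Matrix.of fun i j => M i j z :=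
    fun z => by ext i j; simp [G]
  have hGdet : ∃ᶠ z in 𝓝[≠] 0, G.det z ≠ 0 := by
    refine (hdet.and_eventually self_mem_nhdsWithin).mono fun z ⟨hz, hz0⟩ => ?_
    rw [← Matrix.det_of_apply, hGM, Matrix.det_smul]
    exact mul_ne_zero (pow_ne_zero _ (pow_ne_zero _ hz0)) hz
  obtain ⟨P, hP, R, hR, hR0, hGPR⟩ :=
    exists_polynomial_matrix_mul_of_analyticAt (fun i j => by simpa [G] using hk (i, j)) hGdet
  obtain ⟨C, hC, hCP⟩ := Matrix.exists_ratFunc_eval_eq_inv_pow_smul hP k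
  refine ⟨C, hC, R, hR, by simp [hR0], ?_⟩
  filter_upwards [nhdsWithin_le_nhds hGPR, self_mem_nhdsWithin] with z hz hz0
  have hCz : (Matrix.of fun i j => ratEval (C i j) z) = (z ^ k)⁻¹ • P.map (eval z) := hCP z hz0
  rw [hCz, Matrix.smul_mul, ← hz, hGM, smul_smul, inv_mul_cancel₀ (pow_ne_zero _ hz0),
    one_smul]
end
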